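/- arXiv:2104.01700 — 3 statements merged into one kernel-verified Lean document; each statement's English description precedes it below -/
import Mathlib

section
/- Let 0 < ρ₁ < ρ₂, z₀ ∈ ℂ, and D = {z ∈ ℂ : |z − z₀| < ρ₂}. Suppose H(ν, z) is, for each real ν ≥ ν₀ > 0, an analytic function of z on D, and that h_s(z), s = 0, 1, 2, …, are analytic on D ∖ {z₀}. Assume that H possesses the asymptotic expansion H(ν,z) ~ Σ_{s=0}^∞ h_s(z)/ν^s as ν → ∞ uniformly on the annulus ρ₁ < |z − z₀| < ρ₂, i.e. for every n ∈ ℕ there exist C_n > 0 and ν_n ≥ ν₀ such that |H(ν,z) − Σ_{s=0}^{n−1} h_s(z) ν^{−s}| ≤ C_n ν^{−n} for all ν ≥ ν_n and all z with ρ₁ < |z − z₀| < ρ₂. Then z₀ is an ordinary point or a removable singularity of each h_s, so each h_s extends to a function ĥ_s analytic on all of D, and moreover for every r with ρ₁ < r < ρ₂ and every n ∈ ℕ there exist C'_n > 0 and ν'_n such that |H(ν,z) − Σ_{s=0}^{n−1} ĥ_s(z) ν^{−s}| ≤ C'_n ν^{−n} for all ν ≥ ν'_n and all z with |z − z₀|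 ≤ r; that is, the expansion actually holds throughout D. -/
/-!
On the annulus `A = {ρ₁ < |z - z₀| < ρ₂}` the coefficient `h n` is the uniform limit, as
`ν → ∞`, of `ν ^ n (H ν - ∑_{s<n} ĥ s / ν ^ s)`, and once the lower coefficients `ĥ s` are
holomorphic on the whole disk, so are these functions. By the maximum modulus principle on
circles `|z - z₀| = r` inside `A`, uniform convergence on `A` propagates to the closed disks
`|z - z₀| ≤ r`, so the limit is holomorphic on the disk and extends `h n`; this is the induction
step. The extension agrees with `h n` on the whole punctured disk by the identity theorem (the
punctured disk is connected), and the maximum modulus principle once more carries the remainder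
estimates from a circle in `A` to the disk it bounds.
-/

open Metric Set Filter Topology

theorem exists_seq_of_forall_lt {β : Type*} [Nonempty β] {P : ℕ → β → Prop}
    (h : ∀ n (g : ℕ → β), (∀ s < n, P s (g s)) → ∃ b, P n b) :
    ∃ g : ℕ → β, ∀ n, P n (g n) := by
  have hinit : ∀ n, ∃ g : ℕ → β, ∀ s < n, P s (g s) := by
    intro n
    induction n with
    | zero => exact ⟨fun _ => Classical.arbitrary β, by simp⟩
    | succ n ih =>
      obtain ⟨g, hg⟩ := ih
      obtain ⟨b, hb⟩ := h n g hg
      refine ⟨Function.update g n b, fun s hs => ?_⟩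
      rcases Nat.lt_succ_iff_lt_or_eq.mp hs with hs | rfl
      · simpa [Function.update_of_ne hs.ne] using hg s hs
      · simpa using hb
  choose g hg using hinit
  exact ⟨fun n => g (n + 1) n, fun n => hg (n + 1) n n.lt_succ_self⟩

theorem mem_ball_diff_closedBall_iff {E : Type*} [SeminormedAddCommGroup E] {x y : E}
    {r₁ r₂ : ℝ} : y ∈ ball x r₂ \ closedBall x r₁ ↔ r₁ < ‖y - x‖ ∧ ‖y - x‖ < r₂ := by
  simp [dist_eq_norm, and_comm]

theorem isPreconnected_ball_diff_singleton {E : Type*} [NormedAddCommGroup E] [NormedSpace ℝ E]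
    (h : 1 < Module.rank ℝ E) (x : E) (r : ℝ) : IsPreconnected (ball x r \ {x}) := by
  have hpolar : ball x r \ {x} =
      (fun p : ℝ × E => x + p.1 • p.2) '' (Ioo 0 r ×ˢ sphere 0 1) := by
    ext y
    simp only [Set.mem_sdiff, mem_ball, mem_singleton_iff, mem_image, mem_prod, mem_Ioo,
      mem_sphere_zero_iff_norm, Prod.exists]
    constructor
    · rintro ⟨hyr, hyx⟩
      have hpos : 0 < ‖y - x‖ := norm_pos_iff.2 (sub_ne_zero.2 hyx)
      refine ⟨‖y - x‖, ‖y - x‖⁻¹ • (y - x), ⟨⟨hpos, by rwa [← dist_eq_norm]⟩, ?_⟩, ?_⟩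
      · rw [norm_smul, norm_inv, norm_norm, inv_mul_cancel₀ hpos.ne']
      · rw [smul_inv_smul₀ hpos.ne', add_sub_cancel]
    · rintro ⟨t, u, ⟨⟨ht0, htr⟩, hu⟩, rfl⟩
      refine ⟨?_, fun hx => ?_⟩
      · rwa [dist_eq_norm, add_sub_cancel_left, norm_smul, hu, mul_one,
          Real.norm_of_nonneg ht0.le]
      · rcases smul_eq_zero.1 (by simpa using hx : t • u = 0) with h0 | h0
        · exact ht0.ne' h0
        · simp [h0] at hu
  rw [hpolar]
  exact (isPreconnected_Ioo.prod (isPreconnected_sphere h 0 1)).image _ (by fun_prop)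

theorem AnalyticOnNhd.eqOn_ball_diff_singleton_of_eqOn_annulus {F : Type*}
    [NormedAddCommGroup F] [NormedSpace ℂ F] {f g : ℂ → F} {z₀ : ℂ} {ρ₁ ρ₂ : ℝ} (hρ₁ : 0 ≤ ρ₁)
    (hρ : ρ₁ < ρ₂) (hf : AnalyticOnNhd ℂ f (ball z₀ ρ₂ \ {z₀}))
    (hg : AnalyticOnNhd ℂ g (ball z₀ ρ₂ \ {z₀}))
    (hfg : EqOn f g (ball z₀ ρ₂ \ closedBall z₀ ρ₁)) : EqOn f g (ball z₀ ρ₂ \ {z₀}) := by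
  obtain ⟨w, hw⟩ : (sphere z₀ ((ρ₁ + ρ₂) / 2)).Nonempty :=
    NormedSpace.sphere_nonempty.2 (by linarith)
  have hwA : w ∈ ball z₀ ρ₂ \ closedBall z₀ ρ₁ :=
    mem_ball_diff_closedBall_iff.2 (by rw [mem_sphere_iff_norm.1 hw]; constructor <;> linarith)
  have hrank : 1 < Module.rank ℝ ℂ := by rw [Complex.rank_real_complex]; norm_num
  refine hf.eqOn_of_preconnected_of_eventuallyEq hg (isPreconnected_ball_diff_singleton hrank z₀ ρ₂)
    ⟨hwA.1, fun hwz => hwA.2 ((mem_singleton_iff.1 hwz) ▸ mem_closedBall_self hρ₁)⟩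
    (eventuallyEq_of_mem ((isOpen_ball.sdiff isClosed_closedBall).mem_nhds hwA) hfg)

section MaximumModulus

variable {E F : Type*} [NormedAddCommGroup E] [NormedSpace ℂ E] [Nontrivial E]
  [NormedAddCommGroup F] [NormedSpace ℂ F] {z₀ : E} {r : ℝ}

theorem Complex.norm_le_of_forall_mem_sphere_norm_le {f : E → F} {C : ℝ} (hr : r ≠ 0)
    (hf : DiffContOnCl ℂ f (ball z₀ r)) (hC : ∀ z ∈ sphere z₀ r, ‖f z‖ ≤ C) {z : E}
    (hz : z ∈ closedBall z₀ r) : ‖f z‖ ≤ C := by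
  rw [← closure_ball z₀ hr] at hz
  exact Complex.norm_le_of_forall_mem_frontier_norm_le isBounded_ball hf
    (by rwa [frontier_ball z₀ hr]) hz

theorem Complex.tendstoUniformlyOn_closedBall_of_sphere {ι : Type*} {p : Filter ι}
    {G : ι → E → F} (hr : r ≠ 0) (hG : ∀ᶠ i in p, DiffContOnCl ℂ (G i) (ball z₀ r))
    (h : TendstoUniformlyOn G 0 p (sphere z₀ r)) :
    TendstoUniformlyOn G 0 p (closedBall z₀ r) := by
  rw [SeminormedAddGroup.tendstoUniformlyOn_zero] at h ⊢
  intro ε hε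
  filter_upwards [hG, h (ε / 2) (half_pos hε)] with i hGi hi z hz
  exact (Complex.norm_le_of_forall_mem_sphere_norm_le hr hGi (fun w hw => (hi w hw).le)
    hz).trans_lt (half_lt_self hε)

theorem Complex.uniformCauchySeqOn_closedBall_of_sphere {ι : Type*} {p : Filter ι}
    {G : ι → E → F} (hr : r ≠ 0) (hG : ∀ᶠ i in p, DiffContOnCl ℂ (G i) (ball z₀ r))
    (h : UniformCauchySeqOn G p (sphere z₀ r)) :
    UniformCauchySeqOn G p (closedBall z₀ r) := by
  rw [SeminormedAddGroup.uniformCauchySeqOn_iff_tendstoUniformlyOn_zero] at h ⊢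
  refine Complex.tendstoUniformlyOn_closedBall_of_sphere hr ?_ h
  filter_upwards [hG.prod_mk hG] with i hi using hi.1.neg.add hi.2

end MaximumModulus

theorem tendstoLocallyUniformlyOn_limUnder_of_forall_exists_nhds {ι α β : Type*}
    [TopologicalSpace α] [UniformSpace β] [CompleteSpace β] [Nonempty β] {p : Filter ι} [p.NeBot]
    {F : ι → α → β} {s : Set α} (h : ∀ x ∈ s, ∃ t ∈ 𝓝[s] x, UniformCauchySeqOn F p t) :
    TendstoLocallyUniformlyOn F (fun x => limUnder p (F · x)) p s := by
  refine tendstoLocallyUniformlyOn_of_forall_exists_nhds fun x hx => ?_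
  obtain ⟨t, ht, hF⟩ := h x hx
  refine ⟨t, ht, hF.tendstoUniformlyOn_of_tendsto fun y hy => tendsto_nhds_limUnder ?_⟩
  exact CompleteSpace.complete (hF.cauchy_map hy)

theorem Complex.exists_analyticOnNhd_eqOn_of_tendstoUniformlyOn_annulus {ι E : Type*}
    [NormedAddCommGroup E] [NormedSpace ℂ E] [CompleteSpace E] {p : Filter ι} [p.NeBot]
    {F : ι → ℂ → E} {g : ℂ → E} {z₀ : ℂ} {ρ₁ ρ₂ : ℝ} (hρ : ρ₁ < ρ₂)
    (hF : ∀ᶠ i in p, DifferentiableOn ℂ (F i) (ball z₀ ρ₂))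
    (hFg : TendstoUniformlyOn F g p (ball z₀ ρ₂ \ closedBall z₀ ρ₁)) :
    ∃ G, AnalyticOnNhd ℂ G (ball z₀ ρ₂) ∧ EqOn G g (ball z₀ ρ₂ \ closedBall z₀ ρ₁) := by
  have hcauchy : ∀ z ∈ ball z₀ ρ₂, ∃ t ∈ 𝓝[ball z₀ ρ₂] z, UniformCauchySeqOn F p t := by
    intro z hz
    obtain ⟨r, hr, hrρ₂⟩ := exists_between (max_lt hρ (mem_ball.1 hz))
    have hzr : dist z z₀ < r := (le_max_right _ _).trans_lt hr
    have hsphere : sphere z₀ r ⊆ ball z₀ ρ₂ \ closedBall z₀ ρ₁ := fun w hw => by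
      rw [mem_sphere] at hw
      exact ⟨mem_ball.2 (hw ▸ hrρ₂), fun h => (mem_closedBall.1 h).not_gt
        (hw ▸ (le_max_left _ _).trans_lt hr)⟩
    refine ⟨closedBall z₀ r, mem_nhdsWithin_of_mem_nhds (closedBall_mem_nhds_of_mem hzr), ?_⟩
    refine Complex.uniformCauchySeqOn_closedBall_of_sphere (dist_nonneg.trans_lt hzr).ne' ?_
      (hFg.uniformCauchySeqOn.mono hsphere)
    filter_upwards [hF] with i hi using hi.diffContOnCl_ball (closedBall_subset_ball hrρ₂)
  have hlim := tendstoLocallyUniformlyOn_limUnder_of_forall_exists_nhds hcauchy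
  refine ⟨_, (hlim.differentiableOn hF isOpen_ball).analyticOnNhd isOpen_ball, fun z hz => ?_⟩
  exact tendsto_nhds_unique (hlim.tendsto_at hz.1) (hFg.tendsto_at hz)

theorem sum_range_div_pow_congr {α : Type*} {g h : ℕ → α → ℂ} {n : ℕ} {A : Set α} (hgh : ∀ s < n, EqOn (g s) (h s) A) {z : α}
    (hz : z ∈ A) (c : ℂ) :
    ∑ s ∈ Finset.range n, g s z / c ^ s = ∑ s ∈ Finset.range n, h s z / c ^ s :=
  Finset.sum_congr rfl fun s hs => by rw [hgh s (Finset.mem_range.1 hs) hz]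

theorem AnalyticOnNhd.sub_sum_range_div_pow {f : ℂ → ℂ} {g : ℕ → ℂ → ℂ} {n : ℕ} {U : Set ℂ}
    (hf : AnalyticOnNhd ℂ f U) (hg : ∀ s < n, AnalyticOnNhd ℂ (g s) U) (c : ℂ) :
    AnalyticOnNhd ℂ (fun z => f z - ∑ s ∈ Finset.range n, g s z / c ^ s) U :=
  hf.sub (Finset.analyticOnNhd_fun_sum _ fun s hs => (hg s (Finset.mem_range.1 hs)).div_const)

theorem tendstoUniformlyOn_mul_pow_sub_sum {α : Type*} {H : ℝ → α → ℂ} {h : ℕ → α → ℂ} {n : ℕ}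
    {S : Set α} {C ν₁ : ℝ}
    (hb : ∀ ν : ℝ, ν₁ ≤ ν → ∀ z ∈ S,
      ‖H ν z - ∑ s ∈ Finset.range (n + 1), h s z / (ν : ℂ) ^ s‖ ≤ C / ν ^ (n + 1)) :
    TendstoUniformlyOn
      (fun (ν : ℝ) z => (ν : ℂ) ^ n * (H ν z - ∑ s ∈ Finset.range n, h s z / (ν : ℂ) ^ s))
      (h n) atTop S := by
  rw [Metric.tendstoUniformlyOn_iff]
  intro ε hε
  have hC : Tendsto (fun ν : ℝ => C / ν) atTop (𝓝 0) := tendsto_const_nhds.div_atTop tendsto_id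
  filter_upwards [eventually_ge_atTop ν₁, eventually_gt_atTop 0,
    hC.eventually (gt_mem_nhds hε)] with ν hν₁ hν hνε z hz
  have hν_ne : (ν : ℂ) ≠ 0 := by exact_mod_cast hν.ne'
  have hshift : (ν : ℂ) ^ n * (H ν z - ∑ s ∈ Finset.range n, h s z / (ν : ℂ) ^ s) - h n z
      = (ν : ℂ) ^ n * (H ν z - ∑ s ∈ Finset.range (n + 1), h s z / (ν : ℂ) ^ s) := by
    rw [Finset.sum_range_succ]
    field_simp
    ring
  calc dist (h n z) ((ν : ℂ) ^ n * (H ν z - ∑ s ∈ Finset.range n, h s z / (ν : ℂ) ^ s))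
      = ν ^ n * ‖H ν z - ∑ s ∈ Finset.range (n + 1), h s z / (ν : ℂ) ^ s‖ := by
        rw [dist_comm, dist_eq_norm, hshift, norm_mul, norm_pow, Complex.norm_real,
          Real.norm_of_nonneg hν.le]
    _ ≤ ν ^ n * (C / ν ^ (n + 1)) := by gcongr; exact hb ν hν₁ z hz
    _ = C / ν := by field_simp; ring
    _ < ε := hνε

theorem exists_analyticOnNhd_eqOn_annulus_of_remainder_le {H : ℝ → ℂ → ℂ} {h g : ℕ → ℂ → ℂ}
    {n : ℕ} {z₀ : ℂ} {ρ₁ ρ₂ C ν₁ : ℝ} (hρ : ρ₁ < ρ₂)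
    (hH : ∀ᶠ ν in atTop, AnalyticOnNhd ℂ (H ν) (ball z₀ ρ₂))
    (hg : ∀ s < n, AnalyticOnNhd ℂ (g s) (ball z₀ ρ₂) ∧
      EqOn (g s) (h s) (ball z₀ ρ₂ \ closedBall z₀ ρ₁))
    (hb : ∀ ν : ℝ, ν₁ ≤ ν → ∀ z ∈ ball z₀ ρ₂ \ closedBall z₀ ρ₁,
      ‖H ν z - ∑ s ∈ Finset.range (n + 1), h s z / (ν : ℂ) ^ s‖ ≤ C / ν ^ (n + 1)) :
    ∃ G, AnalyticOnNhd ℂ G (ball z₀ ρ₂) ∧ EqOn G (h n) (ball z₀ ρ₂ \ closedBall z₀ ρ₁) := by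
  set F : ℝ → ℂ → ℂ := fun ν z =>
    (ν : ℂ) ^ n * (H ν z - ∑ s ∈ Finset.range n, g s z / (ν : ℂ) ^ s)
  have hF : ∀ᶠ ν in atTop, DifferentiableOn ℂ (F ν) (ball z₀ ρ₂) := by
    filter_upwards [hH] with ν hν
    exact (analyticOnNhd_const.mul
      (hν.sub_sum_range_div_pow (fun s hs => (hg s hs).1) _)).differentiableOn
  have hFh : TendstoUniformlyOn F (h n) atTop (ball z₀ ρ₂ \ closedBall z₀ ρ₁) :=
    (tendstoUniformlyOn_mul_pow_sub_sum hb).congr <| Eventually.of_forall fun ν z hz => by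
      simp only [F, sum_range_div_pow_congr (fun s hs => (hg s hs).2) hz]
  exact Complex.exists_analyticOnNhd_eqOn_of_tendstoUniformlyOn_annulus hρ hF hFh

theorem asymptotic_expansion_removable_singularity_general
    (ρ₁ ρ₂ : ℝ) (hρ₁ : 0 < ρ₁) (hρ₁₂ : ρ₁ < ρ₂) (z₀ : ℂ)
    (ν₀ : ℝ)
    (H : ℝ → ℂ → ℂ) (h : ℕ → ℂ → ℂ)
    (hH : ∀ ν : ℝ, ν₀ ≤ ν → AnalyticOnNhd ℂ (H ν) (Metric.ball z₀ ρ₂))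
    (hh : ∀ s : ℕ, AnalyticOnNhd ℂ (h s) (Metric.ball z₀ ρ₂ \ {z₀}))
    (hexp : ∀ n : ℕ, ∃ C : ℝ, 0 < C ∧ ∃ νn : ℝ, ν₀ ≤ νn ∧ ∀ ν : ℝ, νn ≤ ν → ∀ z : ℂ,
      ρ₁ < ‖z - z₀‖ → ‖z - z₀‖ < ρ₂ →
      ‖H ν z - ∑ s ∈ Finset.range n, h s z / (ν : ℂ) ^ s‖ ≤ C / ν ^ n) :
    ∃ hext : ℕ → ℂ → ℂ,
      (∀ s : ℕ, AnalyticOnNhd ℂ (hext s) (Metric.ball z₀ ρ₂)) ∧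
      (∀ s : ℕ, ∀ z ∈ Metric.ball z₀ ρ₂ \ {z₀}, hext s z = h s z) ∧
      (∀ r : ℝ, ρ₁ < r → r < ρ₂ → ∀ n : ℕ, ∃ C : ℝ, 0 < C ∧ ∃ νn : ℝ,
        ∀ ν : ℝ, νn ≤ ν → ∀ z : ℂ, ‖z - z₀‖ ≤ r →
        ‖H ν z - ∑ s ∈ Finset.range n, hext s z / (ν : ℂ) ^ s‖ ≤ C / ν ^ n) := by
  set A := ball z₀ ρ₂ \ closedBall z₀ ρ₁
  have hexpA : ∀ n : ℕ, ∃ C : ℝ, 0 < C ∧ ∃ νn : ℝ, ν₀ ≤ νn ∧ ∀ ν : ℝ, νn ≤ ν → ∀ z ∈ A,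
      ‖H ν z - ∑ s ∈ Finset.range n, h s z / (ν : ℂ) ^ s‖ ≤ C / ν ^ n := by
    simpa only [A, mem_ball_diff_closedBall_iff, and_imp] using hexp
  obtain ⟨hext, hext_spec⟩ : ∃ g : ℕ → ℂ → ℂ,
      ∀ n, AnalyticOnNhd ℂ (g n) (ball z₀ ρ₂) ∧ EqOn (g n) (h n) A := by
    refine exists_seq_of_forall_lt
      (P := fun n g => AnalyticOnNhd ℂ g (ball z₀ ρ₂) ∧ EqOn g (h n) A) fun n g hg => ?_
    obtain ⟨C, -, νn, -, hb⟩ := hexpA (n + 1)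
    exact exists_analyticOnNhd_eqOn_annulus_of_remainder_le hρ₁₂ (eventually_atTop.2 ⟨ν₀, hH⟩)
      hg hb
  refine ⟨hext, fun s => (hext_spec s).1, fun s => ?_, fun r hr₁ hr₂ n => ?_⟩
  · exact ((hext_spec s).1.mono sdiff_subset).eqOn_ball_diff_singleton_of_eqOn_annulus hρ₁.le
      hρ₁₂ (hh s) (hext_spec s).2
  obtain ⟨C, hC, νn, hνn, hb⟩ := hexpA n
  refine ⟨C, hC, νn, fun ν hν z hz => ?_⟩
  have hsphere : sphere z₀ r ⊆ A := fun w hw =>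
    mem_ball_diff_closedBall_iff.2 (by rw [mem_sphere_iff_norm.1 hw]; exact ⟨hr₁, hr₂⟩)
  refine Complex.norm_le_of_forall_mem_sphere_norm_le (hρ₁.trans hr₁).ne'
    (((hH ν (hνn.trans hν)).sub_sum_range_div_pow (fun s _ => (hext_spec s).1)
      _).differentiableOn.diffContOnCl_ball (closedBall_subset_ball hr₂))
    (fun w hw => ?_) (mem_closedBall_iff_norm.2 hz)
  rw [sum_range_div_pow_congr (fun s _ => (hext_spec s).2) (hsphere hw)]
  exact hb ν hν w (hsphere hw)

/-- **Theorem (removable singularities of asymptotic expansion coefficients).**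
If `H (ν, ·)` is analytic on the disk `D = ball z₀ ρ₂` for each `ν ≥ ν₀`, the coefficients
`h s` are analytic on `D \ {z₀}`, and `H` has the uniform asymptotic expansion
`H(ν,z) ~ Σ h s z / ν^s` on the annulus `ρ₁ < |z - z₀| < ρ₂`, then each `h s` extends
analytically to all of `D` and the expansion holds uniformly on `|z - z₀| ≤ r` for every
`ρ₁ < r < ρ₂`. -/
theorem asymptotic_expansion_removable_singularity
    (ρ₁ ρ₂ : ℝ) (hρ₁ : 0 < ρ₁) (hρ₁₂ : ρ₁ < ρ₂) (z₀ : ℂ)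
    (ν₀ : ℝ) (hν₀ : 0 < ν₀)
    (H : ℝ → ℂ → ℂ) (h : ℕ → ℂ → ℂ)
    (hH : ∀ ν : ℝ, ν₀ ≤ ν → AnalyticOnNhd ℂ (H ν) (Metric.ball z₀ ρ₂))
    (hh : ∀ s : ℕ, AnalyticOnNhd ℂ (h s) (Metric.ball z₀ ρ₂ \ {z₀}))
    (hexp : ∀ n : ℕ, ∃ C : ℝ, 0 < C ∧ ∃ νn : ℝ, ν₀ ≤ νn ∧ ∀ ν : ℝ, νn ≤ ν → ∀ z : ℂ,
      ρ₁ < ‖z - z₀‖ → ‖z - z₀‖ < ρ₂ →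
      ‖H ν z - ∑ s ∈ Finset.range n, h s z / (ν : ℂ) ^ s‖ ≤ C / ν ^ n) :
    ∃ hext : ℕ → ℂ → ℂ,
      (∀ s : ℕ, AnalyticOnNhd ℂ (hext s) (Metric.ball z₀ ρ₂)) ∧
      (∀ s : ℕ, ∀ z ∈ Metric.ball z₀ ρ₂ \ {z₀}, hext s z = h s z) ∧
      (∀ r : ℝ, ρ₁ < r → r < ρ₂ → ∀ n : ℕ, ∃ C : ℝ, 0 < C ∧ ∃ νn : ℝ,
        ∀ ν : ℝ, νn ≤ ν → ∀ z : ℂ, ‖z - z₀‖ ≤ r →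
        ‖H ν z - ∑ s ∈ Finset.range n, hext s z / (ν : ℂ) ^ s‖ ≤ C / ν ^ n) :=
  asymptotic_expansion_removable_singularity_general ρ₁ ρ₂ hρ₁ hρ₁₂ z₀ ν₀ H h hH hh hexp
end

section
/- Fix μ ∈ ℂ. Then as ν → ∞ through positive real values, 2^{μ−1/2} Γ(μ/2 + ν/2 + 1/2) / (ν^{μ+4/3} Γ(ν/2 − μ/2 + 1/2)) = (1/(√2 ν^{4/3})) (1 + μ(1 − μ²)/(6ν²) + O(ν^{−4})), where ν^{μ+4/3} = exp((μ + 4/3) log ν) with the real logarithm and Γ is the complex Gamma function. -/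
open Complex Filter Finset Topology

namespace GammaRatioAux

lemma log_quartic {z : ℂ} (hz : ‖z‖ ≤ 1/2) :
    ‖Complex.log (1 + z) - (z - z^2/2 + z^3/3 - z^4/4)‖ ≤ ‖z‖^5 := by
  have hz1 : ‖z‖ < 1 := lt_of_le_of_lt hz (by norm_num)
  have h := Complex.norm_log_sub_logTaylor_le 4 hz1
  have hT : Complex.logTaylor 5 z = z - z^2/2 + z^3/3 - z^4/4 := by
    simp [Complex.logTaylor, Finset.sum_range_succ]
    ring
  rw [hT] at h
  norm_num at h
  refine h.trans ?_
  have h0 : (0:ℝ) ≤ ‖z‖ := norm_nonneg z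
  have h2 : (1 - ‖z‖)⁻¹ ≤ 2 := by
    rw [inv_le_comm₀ (by linarith) (by norm_num)]
    linarith
  have h3 : ‖z‖^5 * (1 - ‖z‖)⁻¹ ≤ ‖z‖^5 * 2 :=
    mul_le_mul_of_nonneg_left h2 (by positivity)
  have h4 : 0 ≤ ‖z‖ ^ 5 := by positivity
  linarith

noncomputable def aa (μ : ℂ) : ℂ := (μ+1)/2
noncomputable def bb (μ : ℂ) : ℂ := (1-μ)/2
noncomputable def cc (μ : ℂ) : ℂ := μ*(1-μ^2)/24
noncomputable def KK (μ : ℂ) : ℝ := ‖μ‖ + ‖bb μ‖^5 + ‖aa μ‖^5 + 4*‖cc μ‖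
noncomputable def Y0 (μ : ℂ) : ℝ := 2*‖aa μ‖ + 2*‖bb μ‖ + ‖μ‖ + 8
noncomputable def LL (μ : ℂ) (y : ℝ) : ℂ :=
  μ * Complex.log (1 + 1/(y:ℂ)) + Complex.log (1 + bb μ/(y:ℂ)) - Complex.log (1 + aa μ/(y:ℂ))

lemma KK_nonneg (μ : ℂ) : 0 ≤ KK μ := by unfold KK; positivity

lemma Y0_ge (μ : ℂ) : 8 ≤ Y0 μ := by
  unfold Y0
  have := norm_nonneg (aa μ); have := norm_nonneg (bb μ); have := norm_nonneg μ
  linarith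

lemma key1 (μ z : ℂ) :
    μ * ((1:ℂ)/z - 1^2/(2*z^2) + 1^3/(3*z^3) - 1^4/(4*z^4))
      + (bb μ/z - (bb μ)^2/(2*z^2) + (bb μ)^3/(3*z^3) - (bb μ)^4/(4*z^4))
      - (aa μ/z - (aa μ)^2/(2*z^2) + (aa μ)^3/(3*z^3) - (aa μ)^4/(4*z^4))
      = 2*(cc μ)/z^3 - 3*(cc μ)/z^4 := by
  unfold aa bb cc
  ring

lemma key2 (z : ℂ) (hz : z ≠ 0) (hz1 : z+1 ≠ 0) :
    2/z^3 - 3/z^4 - (1/z^2 - 1/(z+1)^2) = -(4*z+3)/(z^4*(z+1)^2) := by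
  field_simp
  ring

/-- The key pointwise estimate. -/
lemma L_est (μ : ℂ) {y : ℝ} (hy : Y0 μ ≤ y) :
    ‖LL μ y - (cc μ/(y:ℂ)^2 - cc μ/((y:ℂ)+1)^2)‖ ≤ KK μ / y^5 := by
  have hy8 : (8:ℝ) ≤ y := (Y0_ge μ).trans hy
  have hy0 : (0:ℝ) < y := by linarith
  have hyC : (y:ℂ) ≠ 0 := by exact_mod_cast hy0.ne'
  have hyC1 : (y:ℂ) + 1 ≠ 0 := by
    intro h
    have : (y:ℝ) + 1 = 0 := by exact_mod_cast (by push_cast at h ⊢; exact_mod_cast h : ((y:ℝ)+1 : ℂ) = 0)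
    linarith
  have hna : 0 ≤ ‖aa μ‖ := norm_nonneg _
  have hnb : 0 ≤ ‖bb μ‖ := norm_nonneg _
  have hnm : 0 ≤ ‖μ‖ := norm_nonneg _
  have hY0 : 2*‖aa μ‖ + 2*‖bb μ‖ ≤ y := by unfold Y0 at hy; linarith
  -- general quartic estimates
  have est : ∀ w : ℂ, 2*‖w‖ ≤ y →
      ‖Complex.log (1 + w/(y:ℂ)) - (w/(y:ℂ) - w^2/(2*(y:ℂ)^2) + w^3/(3*(y:ℂ)^3) - w^4/(4*(y:ℂ)^4))‖
        ≤ ‖w‖^5 / y^5 := by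
    intro w hw
    have hnw : ‖w/(y:ℂ)‖ ≤ 1/2 := by
      rw [norm_div, Complex.norm_real, Real.norm_of_nonneg hy0.le]
      rw [div_le_div_iff₀ hy0 (by norm_num)]
      linarith
    have h := log_quartic hnw
    have e1 : (w/(y:ℂ) - (w/(y:ℂ))^2/2 + (w/(y:ℂ))^3/3 - (w/(y:ℂ))^4/4)
        = (w/(y:ℂ) - w^2/(2*(y:ℂ)^2) + w^3/(3*(y:ℂ)^3) - w^4/(4*(y:ℂ)^4)) := by ring
    have e2 : ‖w/(y:ℂ)‖^5 = ‖w‖^5/y^5 := by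
      rw [norm_div, Complex.norm_real, Real.norm_of_nonneg hy0.le, div_pow]
    rw [e1, e2] at h
    exact h
  have hY0 : 2*‖aa μ‖ + 2*‖bb μ‖ ≤ y := by
    unfold Y0 at hy; linarith
  have h1 := est 1 (by rw [norm_one]; linarith)
  have hbE := est (bb μ) (by linarith)
  have haE := est (aa μ) (by linarith)
  have h1 := est 1 (by rw [norm_one]; linarith [hY0])
  have hbE := est (bb μ) (by linarith [hY0])
  have haE := est (aa μ) (by linarith [hY0])
  have hbr : μ * ((1:ℂ)/(y:ℂ) - 1^2/(2*(y:ℂ)^2) + 1^3/(3*(y:ℂ)^3) - 1^4/(4*(y:ℂ)^4))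
      + (bb μ/(y:ℂ) - (bb μ)^2/(2*(y:ℂ)^2) + (bb μ)^3/(3*(y:ℂ)^3) - (bb μ)^4/(4*(y:ℂ)^4))
      - (aa μ/(y:ℂ) - (aa μ)^2/(2*(y:ℂ)^2) + (aa μ)^3/(3*(y:ℂ)^3) - (aa μ)^4/(4*(y:ℂ)^4))
      - (cc μ/(y:ℂ)^2 - cc μ/((y:ℂ)+1)^2)
      = cc μ * (-(4*(y:ℂ)+3)/((y:ℂ)^4*((y:ℂ)+1)^2)) := by
    rw [key1 μ (y:ℂ), ← key2 (y:ℂ) hyC hyC1]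
    ring
  have decomp : LL μ y - (cc μ/(y:ℂ)^2 - cc μ/((y:ℂ)+1)^2)
      = μ * (Complex.log (1+1/(y:ℂ)) - ((1:ℂ)/(y:ℂ) - 1^2/(2*(y:ℂ)^2) + 1^3/(3*(y:ℂ)^3) - 1^4/(4*(y:ℂ)^4)))
      + (Complex.log (1+bb μ/(y:ℂ)) - (bb μ/(y:ℂ) - (bb μ)^2/(2*(y:ℂ)^2) + (bb μ)^3/(3*(y:ℂ)^3) - (bb μ)^4/(4*(y:ℂ)^4)))
      - (Complex.log (1+aa μ/(y:ℂ)) - (aa μ/(y:ℂ) - (aa μ)^2/(2*(y:ℂ)^2) + (aa μ)^3/(3*(y:ℂ)^3) - (aa μ)^4/(4*(y:ℂ)^4)))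
      + (μ * ((1:ℂ)/(y:ℂ) - 1^2/(2*(y:ℂ)^2) + 1^3/(3*(y:ℂ)^3) - 1^4/(4*(y:ℂ)^4))
      + (bb μ/(y:ℂ) - (bb μ)^2/(2*(y:ℂ)^2) + (bb μ)^3/(3*(y:ℂ)^3) - (bb μ)^4/(4*(y:ℂ)^4))
      - (aa μ/(y:ℂ) - (aa μ)^2/(2*(y:ℂ)^2) + (aa μ)^3/(3*(y:ℂ)^3) - (aa μ)^4/(4*(y:ℂ)^4))
      - (cc μ/(y:ℂ)^2 - cc μ/((y:ℂ)+1)^2)) := by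
    unfold LL; ring
  rw [decomp, hbr]
  have hrat : ‖cc μ * (-(4*(y:ℂ)+3)/((y:ℂ)^4*((y:ℂ)+1)^2))‖ ≤ 4*‖cc μ‖/y^5 := by
    have e3 : ‖cc μ * (-(4*(y:ℂ)+3)/((y:ℂ)^4*((y:ℂ)+1)^2))‖
        = ‖cc μ‖ * ((4*y+3)/(y^4*(y+1)^2)) := by
      rw [norm_mul, norm_div, norm_neg]
      congr 1
      congr 1
      · have : (4*(y:ℂ)+3) = (((4*y+3 : ℝ)):ℂ) := by push_cast; ring
        rw [this, Complex.norm_real, Real.norm_of_nonneg (by linarith)]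
      · have : ((y:ℂ)^4*((y:ℂ)+1)^2) = (((y^4*(y+1)^2 : ℝ)):ℂ) := by push_cast; ring
        rw [this, Complex.norm_real, Real.norm_of_nonneg (by positivity)]
    rw [e3]
    have hcc : 0 ≤ ‖cc μ‖ := norm_nonneg _
    have hkey : (4*y+3)/(y^4*(y+1)^2) ≤ 4/y^5 := by
      rw [div_le_div_iff₀ (by positivity) (by positivity)]
      nlinarith [pow_nonneg hy0.le 4, pow_nonneg hy0.le 5]
    calc ‖cc μ‖ * ((4*y+3)/(y^4*(y+1)^2)) ≤ ‖cc μ‖ * (4/y^5) :=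
          mul_le_mul_of_nonneg_left hkey hcc
      _ = 4*‖cc μ‖/y^5 := by ring
  have hmul : ‖μ * (Complex.log (1+1/(y:ℂ)) - ((1:ℂ)/(y:ℂ) - 1^2/(2*(y:ℂ)^2) + 1^3/(3*(y:ℂ)^3) - 1^4/(4*(y:ℂ)^4)))‖ ≤ ‖μ‖ * (1/y^5) := by
    rw [norm_mul]
    apply mul_le_mul_of_nonneg_left _ hnm
    simpa using h1
  calc ‖_ + _ - _ + _‖ ≤ ‖_ + _ - _‖ + ‖cc μ * (-(4*(y:ℂ)+3)/((y:ℂ)^4*((y:ℂ)+1)^2))‖ := norm_add_le _ _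
    _ ≤ (‖_ + _‖ + ‖_‖) + ‖cc μ * (-(4*(y:ℂ)+3)/((y:ℂ)^4*((y:ℂ)+1)^2))‖ := by
        gcongr
        exact norm_sub_le _ _
    _ ≤ ((‖_‖ + ‖_‖) + ‖_‖) + ‖cc μ * (-(4*(y:ℂ)+3)/((y:ℂ)^4*((y:ℂ)+1)^2))‖ := by
        gcongr
        exact norm_add_le _ _
    _ ≤ ((‖μ‖ * (1/y^5) + ‖bb μ‖^5/y^5) + ‖aa μ‖^5/y^5) + 4*‖cc μ‖/y^5 :=
        add_le_add (add_le_add (add_le_add hmul hbE) haE) hrat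
    _ = KK μ / y^5 := by unfold KK; field_simp

lemma hasSum_of_telescope {α : Type*} [NormedAddCommGroup α] [CompleteSpace α] (f : ℕ → α) (l : α)
    (hs : Summable fun n => f n - f (n+1)) (hf : Tendsto f atTop (𝓝 l)) :
    HasSum (fun n => f n - f (n+1)) (f 0 - l) := by
  have h1 := hs.hasSum.tendsto_sum_nat
  have he : (fun n => ∑ i ∈ Finset.range n, (f i - f (i+1))) = fun n => f 0 - f n := by
    funext n; exact Finset.sum_range_sub' f n
  rw [he] at h1
  have h2 : Tendsto (fun n => f 0 - f n) atTop (𝓝 (f 0 - l)) := tendsto_const_nhds.sub hf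
  exact tendsto_nhds_unique h1 h2 ▸ hs.hasSum

lemma summable_invpow (x : ℝ) (hx : 1 ≤ x) : Summable (fun j : ℕ => 1/(x+(j:ℝ))^2) := by
  have h : Summable (fun j : ℕ => 1/((j:ℝ)+1)^2) := by
    have h3 := (summable_nat_add_iff (f := fun n : ℕ => 1/(n:ℝ)^2) 1).mpr
      (Real.summable_one_div_nat_pow.mpr one_lt_two)
    simpa using h3
  apply Summable.of_nonneg_of_le (fun j => by positivity) _ h
  intro j
  have hj : (0:ℝ) ≤ (j:ℝ) := Nat.cast_nonneg j
  apply one_div_le_one_div_of_le (by positivity)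
  have h4 : ((j:ℝ)+1) ≤ x + j := by linarith
  have h5 : (0:ℝ) < (j:ℝ)+1 := by linarith
  nlinarith

lemma ineq5 {y : ℝ} (hy : 2 ≤ y) : 1/y^5 ≤ 1/(y-1)^4 - 1/y^4 := by
  have h1 : (0:ℝ) < y - 1 := by linarith
  have h0 : (0:ℝ) < y := by linarith
  rw [div_sub_div _ _ (by positivity) (by positivity), div_le_div_iff₀ (by positivity) (by positivity)]
  nlinarith [pow_pos h0 4, pow_pos h1 4, pow_pos h0 5, sq_nonneg (y-1), sq_nonneg y,
    pow_nonneg h1.le 3, pow_nonneg h0.le 3, mul_pos (pow_pos h0 4) (pow_pos h1 2)]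

lemma tendsto_inv_pow_shift (x c : ℝ) (p : ℕ) (hp : p ≠ 0) :
    Tendsto (fun n : ℕ => 1/(x+(n:ℝ)+c)^p) atTop (𝓝 0) := by
  simp only [one_div]
  apply Tendsto.inv_tendsto_atTop
  exact (tendsto_pow_atTop hp).comp (tendsto_atTop_add_const_right atTop c
    (tendsto_atTop_add_const_left atTop x tendsto_natCast_atTop_atTop))

/-- Summability of `L` along `x+j` and the key estimate for the sum. -/
lemma S_props (μ : ℂ) {x : ℝ} (hx : Y0 μ + 2 ≤ x) :
    Summable (fun j : ℕ => LL μ (x+(j:ℝ))) ∧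
    ‖(∑' j : ℕ, LL μ (x+(j:ℝ))) - cc μ/(x:ℂ)^2‖ ≤ 16*KK μ/x^4 := by
  have hY8 : (8:ℝ) ≤ Y0 μ := Y0_ge μ
  have hx10 : (10:ℝ) ≤ x := by linarith
  have hx0 : (0:ℝ) < x := by linarith
  have hK0 : 0 ≤ KK μ := KK_nonneg μ
  set f : ℕ → ℂ := fun n => cc μ / (((x+(n:ℝ)) : ℝ):ℂ)^2 with hf
  -- the remainders
  have hr : ∀ j : ℕ, ‖LL μ (x+(j:ℝ)) - (f j - f (j+1))‖ ≤ KK μ/(x+(j:ℝ))^5 := by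
    intro j
    have hj : (0:ℝ) ≤ (j:ℝ) := Nat.cast_nonneg j
    have h := L_est μ (y := x+(j:ℝ)) (by linarith)
    have e : f j - f (j+1)
        = cc μ/(((x+(j:ℝ)):ℝ):ℂ)^2 - cc μ/((((x+(j:ℝ)):ℝ):ℂ)+1)^2 := by
      simp only [hf]
      congr 2
      push_cast
      ring
    rw [e]
    exact h
  -- summability of f
  have hfsum : Summable f := by
    apply Summable.of_norm_bounded ((summable_invpow x (by linarith)).mul_left ‖cc μ‖)
    intro j
    have hj : (0:ℝ) ≤ (j:ℝ) := Nat.cast_nonneg j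
    have : ‖f j‖ = ‖cc μ‖ * (1/(x+(j:ℝ))^2) := by
      simp only [hf]
      rw [norm_div, norm_pow, Complex.norm_real, Real.norm_of_nonneg (by linarith)]
      ring
    exact le_of_eq this
  have hΔsum : Summable (fun n => f n - f (n+1)) :=
    hfsum.sub ((summable_nat_add_iff 1).mpr hfsum)
  have hf0 : Tendsto f atTop (𝓝 0) := by
    rw [tendsto_zero_iff_norm_tendsto_zero]
    have he : (fun n : ℕ => ‖f n‖) = fun n : ℕ => ‖cc μ‖ * (1/(x+(n:ℝ)+0)^2) := by
      funext n
      have hn : (0:ℝ) ≤ (n:ℝ) := Nat.cast_nonneg n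
      simp only [hf]
      rw [norm_div, norm_pow, Complex.norm_real, Real.norm_of_nonneg (by linarith)]
      ring
    rw [he]
    simpa using (tendsto_inv_pow_shift x 0 2 (by norm_num)).const_mul (‖cc μ‖)
  have hΔhas : HasSum (fun n => f n - f (n+1)) (cc μ/(x:ℂ)^2) := by
    have h := hasSum_of_telescope f 0 hΔsum hf0
    have e0 : f 0 = cc μ/(x:ℂ)^2 := by simp only [hf]; norm_num
    rw [e0, sub_zero] at h
    exact h
  -- the comparison telescoping sum
  set F : ℕ → ℝ := fun n => 1/(x+(n:ℝ)-1)^4 with hF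
  have hFanti : ∀ j : ℕ, KK μ/(x+(j:ℝ))^5 ≤ KK μ * (F j - F (j+1)) := by
    intro j
    have hj : (0:ℝ) ≤ (j:ℝ) := Nat.cast_nonneg j
    have h5 := ineq5 (y := x+(j:ℝ)) (by linarith)
    have e : F j - F (j+1) = 1/(x+(j:ℝ)-1)^4 - 1/(x+(j:ℝ))^4 := by
      simp only [hF]
      congr 3
      push_cast
      ring
    rw [e, div_eq_mul_one_div (KK μ)]
    exact mul_le_mul_of_nonneg_left h5 hK0
  have hFdiff_nonneg : ∀ j : ℕ, 0 ≤ F j - F (j+1) := by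
    intro j
    have hj : (0:ℝ) ≤ (j:ℝ) := Nat.cast_nonneg j
    have h5 := ineq5 (y := x+(j:ℝ)) (by linarith)
    have h6 : 0 ≤ 1/(x+(j:ℝ))^5 := by positivity
    have e : F j - F (j+1) = 1/(x+(j:ℝ)-1)^4 - 1/(x+(j:ℝ))^4 := by
      simp only [hF]; congr 3; push_cast; ring
    rw [e]; linarith
  have hFsum : Summable (fun j => F j - F (j+1)) := by
    apply summable_of_sum_range_le (c := F 0) hFdiff_nonneg
    intro n
    rw [Finset.sum_range_sub' F n]
    have hn : (0:ℝ) ≤ (n:ℝ) := Nat.cast_nonneg n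
    have : 0 ≤ F n := by simp only [hF]; positivity
    linarith
  have hFten : Tendsto F atTop (𝓝 0) := by
    have : F = fun n : ℕ => 1/(x+(n:ℝ)+(-1))^4 := by funext n; simp only [hF]; ring_nf
    rw [this]
    exact tendsto_inv_pow_shift x (-1) 4 (by norm_num)
  have hFhas : HasSum (fun j => F j - F (j+1)) (1/(x-1)^4) := by
    have h := hasSum_of_telescope F 0 hFsum hFten
    have e0 : F 0 = 1/(x-1)^4 := by simp only [hF]; norm_num
    rw [e0, sub_zero] at h
    exact h
  -- the five-sum
  have hgsum : Summable (fun j : ℕ => KK μ/(x+(j:ℝ))^5) := by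
    apply Summable.of_nonneg_of_le (fun j => by positivity) hFanti (hFsum.mul_left (KK μ))
  -- remainder function
  set r : ℕ → ℂ := fun j => LL μ (x+(j:ℝ)) - (f j - f (j+1)) with hrdef
  have hrnormsum : Summable (fun j => ‖r j‖) :=
    Summable.of_nonneg_of_le (fun j => norm_nonneg _) hr hgsum
  have hrsum : Summable r := hrnormsum.of_norm
  have hLL : (fun j : ℕ => LL μ (x+(j:ℝ))) = fun j => (f j - f (j+1)) + r j := by
    funext j; simp only [hrdef]; ring
  have hLLsum : Summable (fun j : ℕ => LL μ (x+(j:ℝ))) := by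
    rw [hLL]; exact hΔsum.add hrsum
  refine ⟨hLLsum, ?_⟩
  have hLLhas : HasSum (fun j : ℕ => LL μ (x+(j:ℝ))) (cc μ/(x:ℂ)^2 + ∑' j, r j) := by
    rw [hLL]; exact hΔhas.add hrsum.hasSum
  rw [hLLhas.tsum_eq]
  have e7 : cc μ/(x:ℂ)^2 + (∑' j, r j) - cc μ/(x:ℂ)^2 = ∑' j, r j := by ring
  rw [e7]
  calc ‖∑' j, r j‖ ≤ ∑' j, ‖r j‖ := norm_tsum_le_tsum_norm hrnormsum
    _ ≤ ∑' j : ℕ, KK μ/(x+(j:ℝ))^5 := Summable.tsum_le_tsum hr hrnormsum hgsum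
    _ ≤ ∑' j, KK μ * (F j - F (j+1)) :=
        Summable.tsum_le_tsum hFanti hgsum (hFsum.mul_left (KK μ))
    _ = KK μ * (1/(x-1)^4) := by rw [tsum_mul_left, hFhas.tsum_eq]
    _ ≤ 16*KK μ/x^4 := by
        rw [mul_one_div]
        rw [div_le_div_iff₀ (pow_pos (by linarith : (0:ℝ) < x-1) 4) (pow_pos hx0 4)]
        have h8 : x ≤ 2*(x-1) := by linarith
        have h9 : x^4 ≤ 16*(x-1)^4 := by
          calc x^4 ≤ (2*(x-1))^4 := pow_le_pow_left₀ (by linarith) h8 4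
            _ = 16*(x-1)^4 := by ring
        nlinarith [mul_le_mul_of_nonneg_left h9 hK0]

lemma one_add_ne {z : ℂ} (h : ‖z‖ < 1) : 1 + z ≠ 0 := by
  intro h0
  have hz : z = -1 := by linear_combination h0
  rw [hz] at h
  simp at h

lemma norm_div_lt (w : ℂ) {y : ℝ} (h0 : 0 < y) (h : 2*‖w‖ ≤ y) : ‖w/(y:ℂ)‖ < 1 := by
  rw [norm_div, Complex.norm_real, Real.norm_of_nonneg h0.le]
  rw [div_lt_one h0]
  linarith [norm_nonneg w]

lemma exp_LL (μ : ℂ) {y : ℝ} (hy : Y0 μ ≤ y) :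
    Complex.exp (LL μ y)
      = Complex.exp (μ * ((Real.log ((y+1)/y) : ℝ) : ℂ)) * (((y:ℂ)+bb μ)/((y:ℂ)+aa μ)) := by
  have hy8 : (8:ℝ) ≤ y := (Y0_ge μ).trans hy
  have hy0 : (0:ℝ) < y := by linarith
  have hyC : (y:ℂ) ≠ 0 := by exact_mod_cast hy0.ne'
  have hY0 : 2*‖aa μ‖ + 2*‖bb μ‖ ≤ y := by
    unfold Y0 at hy
    have := norm_nonneg μ
    linarith
  have hna := norm_nonneg (aa μ); have hnb := norm_nonneg (bb μ)
  have h1a : 1 + aa μ/(y:ℂ) ≠ 0 := one_add_ne (norm_div_lt _ hy0 (by linarith))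
  have h1b : 1 + bb μ/(y:ℂ) ≠ 0 := one_add_ne (norm_div_lt _ hy0 (by linarith))
  have hlog1 : Complex.log (1 + 1/(y:ℂ)) = ((Real.log ((y+1)/y) : ℝ) : ℂ) := by
    have e : (1 + 1/(y:ℂ)) = (((y+1)/y : ℝ) : ℂ) := by
      push_cast
      field_simp
    rw [e, ← Complex.ofReal_log (by positivity)]
  unfold LL
  rw [Complex.exp_sub, Complex.exp_add, Complex.exp_log h1b, Complex.exp_log h1a, hlog1]
  rw [mul_div_assoc]
  congr 1
  field_simp

lemma re_pos_a (μ : ℂ) {x : ℝ} (hx : Y0 μ + 2 ≤ x) (j : ℕ) : 0 < ((x:ℂ) + aa μ + (j:ℂ)).re := by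
  have hY8 : (8:ℝ) ≤ Y0 μ := Y0_ge μ
  have hre : |(aa μ).re| ≤ ‖aa μ‖ := Complex.abs_re_le_norm (aa μ)
  have hY0 : 2*‖aa μ‖ + 8 ≤ Y0 μ := by
    unfold Y0
    have := norm_nonneg (bb μ); have := norm_nonneg μ
    linarith
  have hj : (0:ℝ) ≤ (j:ℝ) := Nat.cast_nonneg j
  simp only [Complex.add_re, Complex.ofReal_re, Complex.natCast_re]
  have h1 : -‖aa μ‖ ≤ (aa μ).re := by cases abs_le.mp hre; linarith
  linarith

lemma re_pos_b (μ : ℂ) {x : ℝ} (hx : Y0 μ + 2 ≤ x) (j : ℕ) : 0 < ((x:ℂ) + bb μ + (j:ℂ)).re := by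
  have hY8 : (8:ℝ) ≤ Y0 μ := Y0_ge μ
  have hre : |(bb μ).re| ≤ ‖bb μ‖ := Complex.abs_re_le_norm (bb μ)
  have hY0 : 2*‖bb μ‖ + 8 ≤ Y0 μ := by
    unfold Y0
    have := norm_nonneg (aa μ); have := norm_nonneg μ
    linarith
  have hj : (0:ℝ) ≤ (j:ℝ) := Nat.cast_nonneg j
  simp only [Complex.add_re, Complex.ofReal_re, Complex.natCast_re]
  have h1 : -‖bb μ‖ ≤ (bb μ).re := by cases abs_le.mp hre; linarith
  linarith

lemma ne_zero_of_re_pos {z : ℂ} (h : 0 < z.re) : z ≠ 0 := by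
  intro h0
  rw [h0] at h
  simp at h

/-- The Gamma-quotient identity. -/
lemma gamma_eq (μ : ℂ) {x : ℝ} (hx : Y0 μ + 2 ≤ x) :
    Complex.Gamma ((x:ℂ) + aa μ) / (Complex.exp (μ * ((Real.log x : ℝ) : ℂ)) * Complex.Gamma ((x:ℂ) + bb μ))
      = Complex.exp (∑' j : ℕ, LL μ (x+(j:ℝ))) := by
  have hY8 : (8:ℝ) ≤ Y0 μ := Y0_ge μ
  have hx0 : (0:ℝ) < x := by linarith
  have hΓb : Complex.Gamma ((x:ℂ) + bb μ) ≠ 0 := by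
    apply Complex.Gamma_ne_zero_of_re_pos
    have := re_pos_b μ hx 0
    simpa using this
  -- partial-sum identity
  have key : ∀ n : ℕ, Complex.exp (∑ j ∈ Finset.range n, LL μ (x+(j:ℝ)))
      = Complex.exp (μ * ((Real.log ((x+(n:ℝ))/x) : ℝ) : ℂ))
        * ∏ j ∈ Finset.range n, (((x:ℂ)+bb μ+(j:ℂ))/((x:ℂ)+aa μ+(j:ℂ))) := by
    intro n
    induction n with
    | zero => simp [div_self hx0.ne']
    | succ n ih =>
      rw [Finset.sum_range_succ, Finset.prod_range_succ, Complex.exp_add, ih]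
      have hyn : Y0 μ ≤ x + (n:ℝ) := by
        have : (0:ℝ) ≤ (n:ℝ) := Nat.cast_nonneg n
        linarith
      rw [exp_LL μ hyn]
      have hcast1 : (((x+(n:ℝ)):ℝ):ℂ) + bb μ = (x:ℂ)+bb μ+(n:ℂ) := by push_cast; ring
      have hcast2 : (((x+(n:ℝ)):ℝ):ℂ) + aa μ = (x:ℂ)+aa μ+(n:ℂ) := by push_cast; ring
      have hlogadd : Real.log ((x+(n:ℝ))/x) + Real.log ((x+(n:ℝ)+1)/(x+(n:ℝ)))
          = Real.log ((x+((n:ℝ)+1))/x) := by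
        have hn : (0:ℝ) ≤ (n:ℝ) := Nat.cast_nonneg n
        rw [← Real.log_mul (by positivity) (by positivity)]
        congr 1
        field_simp
        ring
      have hC : ((n+1:ℕ):ℝ) = ((n:ℝ)+1) := by push_cast; ring
      rw [hcast1, hcast2, hC, ← hlogadd, Complex.ofReal_add, mul_add μ, Complex.exp_add]
      ring
  -- GammaSeq ratio identity
  have ratio_eq : ∀ n : ℕ, n ≠ 0 →
      Complex.GammaSeq ((x:ℂ)+aa μ) n / Complex.GammaSeq ((x:ℂ)+bb μ) n
      = Complex.exp (μ * ((Real.log (n:ℝ) : ℝ) : ℂ))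
        * ∏ j ∈ Finset.range (n+1), (((x:ℂ)+bb μ+(j:ℂ))/((x:ℂ)+aa μ+(j:ℂ))) := by
    intro n hn
    have hnC : ((n:ℕ):ℂ) ≠ 0 := Nat.cast_ne_zero.mpr hn
    have hexp : ((n:ℕ):ℂ)^((x:ℂ)+aa μ)
        = Complex.exp (μ * ((Real.log (n:ℝ) : ℝ) : ℂ)) * ((n:ℕ):ℂ)^((x:ℂ)+bb μ) := by
      rw [Complex.cpow_def_of_ne_zero hnC, Complex.cpow_def_of_ne_zero hnC, ← Complex.exp_add]
      congr 1
      have hlog : Complex.log ((n:ℕ):ℂ) = ((Real.log (n:ℝ) : ℝ) : ℂ) := by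
        rw [← Complex.ofReal_natCast, ← Complex.ofReal_log (Nat.cast_nonneg n)]
      rw [hlog]
      unfold aa bb
      ring
    have hprodA : ∏ j ∈ Finset.range (n+1), ((x:ℂ)+aa μ+(j:ℂ)) ≠ 0 :=
      Finset.prod_ne_zero_iff.mpr (fun j _ => ne_zero_of_re_pos (re_pos_a μ hx j))
    have hprodB : ∏ j ∈ Finset.range (n+1), ((x:ℂ)+bb μ+(j:ℂ)) ≠ 0 :=
      Finset.prod_ne_zero_iff.mpr (fun j _ => ne_zero_of_re_pos (re_pos_b μ hx j))
    have hfact : ((n.factorial : ℕ):ℂ) ≠ 0 := Nat.cast_ne_zero.mpr n.factorial_ne_zero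
    have hpow : ((n:ℕ):ℂ)^((x:ℂ)+bb μ) ≠ 0 := by
      rw [Complex.cpow_def_of_ne_zero hnC]
      exact Complex.exp_ne_zero _
    rw [Complex.GammaSeq, Complex.GammaSeq, hexp, Finset.prod_div_distrib]
    field_simp
  -- limits
  have hsum := (S_props μ hx).1
  have hA : Tendsto (fun n : ℕ => Complex.exp (∑ j ∈ Finset.range (n+1), LL μ (x+(j:ℝ)))) atTop
      (𝓝 (Complex.exp (∑' j : ℕ, LL μ (x+(j:ℝ))))) := by
    apply (Complex.continuous_exp.tendsto _).comp
    exact hsum.hasSum.tendsto_sum_nat.comp (tendsto_add_atTop_nat 1)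
  have hBreal : Tendsto (fun n : ℕ => Real.log (n:ℝ) - Real.log ((x+((n:ℕ)+1:ℝ))/x)) atTop
      (𝓝 (Real.log x)) := by
    have hev : (fun n : ℕ => Real.log x - Real.log ((x+(n:ℝ)+1)/(n:ℝ)))
        =ᶠ[atTop] (fun n : ℕ => Real.log (n:ℝ) - Real.log ((x+((n:ℕ)+1:ℝ))/x)) := by
      filter_upwards [eventually_ge_atTop 1] with n hn
      have hn0 : (0:ℝ) < (n:ℝ) := by exact_mod_cast Nat.pos_of_ne_zero (by omega)
      rw [Real.log_div (by positivity) hx0.ne', Real.log_div (by positivity) hn0.ne']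
      push_cast
      ring
    apply Tendsto.congr' hev
    have hw : Tendsto (fun n : ℕ => (x+(n:ℝ)+1)/(n:ℝ)) atTop (𝓝 1) := by
      have he2 : (fun n : ℕ => (x+1)*(1/(n:ℝ)) + 1) =ᶠ[atTop] (fun n : ℕ => (x+(n:ℝ)+1)/(n:ℝ)) := by
        filter_upwards [eventually_ge_atTop 1] with n hn
        have hn0 : (0:ℝ) < (n:ℝ) := by exact_mod_cast Nat.pos_of_ne_zero (by omega)
        field_simp
        ring
      apply Tendsto.congr' he2
      have := (tendsto_one_div_atTop_nhds_zero_nat).const_mul (x+1)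
      have h3 := this.add_const 1
      simpa using h3
    have hlogw : Tendsto (fun n : ℕ => Real.log ((x+(n:ℝ)+1)/(n:ℝ))) atTop (𝓝 0) := by
      have := ((Real.continuousAt_log one_ne_zero).tendsto).comp hw
      simpa [Function.comp_def] using this
    have hsub := Tendsto.sub
      (tendsto_const_nhds : Tendsto (fun _ : ℕ => Real.log x) atTop (𝓝 (Real.log x))) hlogw
    simpa using hsub
  have hB : Tendsto (fun n : ℕ => Complex.exp (μ * ((Real.log (n:ℝ) - Real.log ((x+((n:ℕ)+1:ℝ))/x) : ℝ) : ℂ))) atTop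
      (𝓝 (Complex.exp (μ * ((Real.log x : ℝ) : ℂ)))) := by
    apply (Complex.continuous_exp.tendsto _).comp
    apply Tendsto.const_mul
    exact (Complex.continuous_ofReal.tendsto _).comp hBreal
  have h1 : Tendsto (fun n : ℕ => Complex.GammaSeq ((x:ℂ)+aa μ) n / Complex.GammaSeq ((x:ℂ)+bb μ) n)
      atTop (𝓝 (Complex.Gamma ((x:ℂ)+aa μ) / Complex.Gamma ((x:ℂ)+bb μ))) :=
    (Complex.GammaSeq_tendsto_Gamma _).div (Complex.GammaSeq_tendsto_Gamma _) hΓb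
  have h2 : (fun n : ℕ => Complex.exp (∑ j ∈ Finset.range (n+1), LL μ (x+(j:ℝ)))
        * Complex.exp (μ * ((Real.log (n:ℝ) - Real.log ((x+((n:ℕ)+1:ℝ))/x) : ℝ) : ℂ)))
      =ᶠ[atTop] (fun n : ℕ => Complex.GammaSeq ((x:ℂ)+aa μ) n / Complex.GammaSeq ((x:ℂ)+bb μ) n) := by
    filter_upwards [eventually_ge_atTop 1] with n hn
    rw [ratio_eq n (by omega), key (n+1)]
    rw [mul_right_comm]
    congr 1
    rw [← Complex.exp_add]
    congr 1
    push_cast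
    ring
  have hmain : Complex.Gamma ((x:ℂ)+aa μ) / Complex.Gamma ((x:ℂ)+bb μ)
      = Complex.exp (∑' j : ℕ, LL μ (x+(j:ℝ))) * Complex.exp (μ * ((Real.log x : ℝ) : ℂ)) :=
    tendsto_nhds_unique (h1.congr' h2.symm) (hA.mul hB)
  have hE := Complex.exp_ne_zero (μ * ((Real.log x : ℝ) : ℂ))
  rw [div_eq_iff hΓb] at hmain
  rw [hmain]
  field_simp

end GammaRatioAux

open GammaRatioAux

/-- **Asymptotics of the Gamma-function ratio** `γ_μ(ν)`:
for fixed `μ ∈ ℂ`, as `ν → +∞`,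
`2^(μ-1/2) Γ(μ/2+ν/2+1/2) / (ν^(μ+4/3) Γ(ν/2-μ/2+1/2))
  = (1/(√2 ν^(4/3))) (1 + μ(1-μ²)/(6ν²) + O(ν⁻⁴))`,
where `ν^(μ+4/3) = exp((μ+4/3) log ν)` with the real logarithm. -/
theorem gamma_ratio_asymptotic (μ : ℂ) :
    ∃ E : ℝ → ℂ,
      (∃ C ν₁ : ℝ, 0 < C ∧ ∀ ν : ℝ, ν₁ ≤ ν → ‖E ν‖ ≤ C / ν ^ 4) ∧
      (∀ ν : ℝ, 0 < ν →
        (2 : ℂ) ^ (μ - 1 / 2) * Complex.Gamma (μ / 2 + (ν : ℂ) / 2 + 1 / 2) /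
            (Complex.exp ((μ + 4 / 3) * (Real.log ν : ℂ)) *
              Complex.Gamma ((ν : ℂ) / 2 - μ / 2 + 1 / 2)) =
          (1 / (((Real.sqrt 2 : ℝ) : ℂ) * ((ν ^ ((4 : ℝ) / 3) : ℝ) : ℂ))) *
            (1 + μ * (1 - μ ^ 2) / (6 * (ν : ℂ) ^ 2) + E ν)) := by
  refine ⟨fun ν => (((Real.sqrt 2 : ℝ) : ℂ) * ((ν ^ ((4 : ℝ) / 3) : ℝ) : ℂ)) *
      ((2 : ℂ) ^ (μ - 1 / 2) * Complex.Gamma (μ / 2 + (ν : ℂ) / 2 + 1 / 2) /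
        (Complex.exp ((μ + 4 / 3) * (Real.log ν : ℂ)) *
          Complex.Gamma ((ν : ℂ) / 2 - μ / 2 + 1 / 2)))
      - 1 - μ * (1 - μ ^ 2) / (6 * (ν : ℂ) ^ 2), ?_, ?_⟩
  · -- the bound
    have hK0 : 0 ≤ KK μ := KK_nonneg μ
    have hY8 : (8:ℝ) ≤ Y0 μ := Y0_ge μ
    obtain ⟨M, hM⟩ : ∃ M : ℝ, M = ‖cc μ‖ + 16 * KK μ := ⟨_, rfl⟩
    have hM0 : 0 ≤ M := by have := norm_nonneg (cc μ); rw [hM]; linarith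
    refine ⟨16*(M^2 + 16*KK μ) + 1, 2*(Y0 μ) + 2*M + 12, by nlinarith [sq_nonneg M], ?_⟩
    intro ν hν
    have hν28 : (28:ℝ) ≤ ν := by linarith
    have hν0 : (0:ℝ) < ν := by linarith
    have hx : Y0 μ + 2 ≤ ν/2 := by linarith
    have hxM : M + 1 ≤ ν/2 := by linarith
    have hx2 : (2:ℝ) ≤ ν/2 := by linarith
    have hx0 : (0:ℝ) < ν/2 := by linarith
    -- Gamma argument identification
    have hxc : (((ν/2 : ℝ)):ℂ) = (ν:ℂ)/2 := by push_cast; ring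
    have hΓ1 : ((ν/2:ℝ):ℂ) + aa μ = μ/2 + (ν:ℂ)/2 + 1/2 := by
      rw [hxc]; unfold aa; ring
    have hΓ2 : ((ν/2:ℝ):ℂ) + bb μ = (ν:ℂ)/2 - μ/2 + 1/2 := by
      rw [hxc]; unfold bb; ring
    have hΓ2ne : Complex.Gamma ((ν:ℂ)/2 - μ/2 + 1/2) ≠ 0 := by
      rw [← hΓ2]
      apply Complex.Gamma_ne_zero_of_re_pos
      have := re_pos_b μ hx 0
      simpa using this
    -- scalar exponential identity
    have hsq : ((Real.sqrt 2 : ℝ) : ℂ) = Complex.exp (((Real.log 2 / 2 : ℝ)):ℂ) := by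
      have h2 : Real.sqrt 2 = Real.exp (Real.log 2 / 2) := by
        rw [show (Real.sqrt 2) = (2:ℝ) ^ ((1:ℝ)/2) from Real.sqrt_eq_rpow 2,
          Real.rpow_def_of_pos two_pos]
        congr 1; ring
      rw [h2, Complex.ofReal_exp]
    have hrpow : ((ν ^ ((4:ℝ)/3) : ℝ) : ℂ) = Complex.exp (((Real.log ν * (4/3) : ℝ)):ℂ) := by
      rw [Real.rpow_def_of_pos hν0, Complex.ofReal_exp]
    have h2pow : (2:ℂ)^(μ - 1/2) = Complex.exp (((Real.log 2 : ℝ):ℂ) * (μ - 1/2)) := by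
      rw [Complex.cpow_def_of_ne_zero two_ne_zero]
      congr 1
      congr 1
      rw [show (2:ℂ) = ((2:ℝ):ℂ) by norm_num, ← Complex.ofReal_log (by norm_num : (0:ℝ) ≤ 2)]
    have hlogx : Real.log (ν/2) = Real.log ν - Real.log 2 := Real.log_div hν0.ne' two_ne_zero
    have hsc : ((Real.sqrt 2:ℝ):ℂ) * ((ν ^ ((4:ℝ)/3) : ℝ):ℂ) * ((2:ℂ)^(μ-1/2))
        * Complex.exp (μ * ((Real.log (ν/2) : ℝ):ℂ))
        = Complex.exp ((μ + 4/3) * ((Real.log ν : ℝ):ℂ)) := by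
      rw [hsq, hrpow, h2pow, hlogx, ← Complex.exp_add, ← Complex.exp_add, ← Complex.exp_add]
      congr 1
      push_cast
      ring
    -- main identity : c ν * G ν = exp (S)
    have hgamma := gamma_eq μ hx
    rw [hΓ1, hΓ2] at hgamma
    have hmain : (((Real.sqrt 2 : ℝ) : ℂ) * ((ν ^ ((4 : ℝ) / 3) : ℝ) : ℂ)) *
        ((2 : ℂ) ^ (μ - 1 / 2) * Complex.Gamma (μ / 2 + (ν : ℂ) / 2 + 1 / 2) /
          (Complex.exp ((μ + 4 / 3) * (Real.log ν : ℂ)) *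
            Complex.Gamma ((ν : ℂ) / 2 - μ / 2 + 1 / 2)))
        = Complex.exp (∑' j : ℕ, LL μ (ν/2+(j:ℝ))) := by
      rw [← hgamma]
      have hEd := Complex.exp_ne_zero ((μ + 4/3) * ((Real.log ν : ℝ):ℂ))
      have hEe := Complex.exp_ne_zero (μ * ((Real.log (ν/2) : ℝ):ℂ))
      rw [← mul_div_assoc, div_eq_div_iff (mul_ne_zero hEd hΓ2ne) (mul_ne_zero hEe hΓ2ne)]
      linear_combination (Complex.Gamma (μ/2+(ν:ℂ)/2+1/2) * Complex.Gamma ((ν:ℂ)/2-μ/2+1/2)) * hsc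
    have hνC : (ν:ℂ) ≠ 0 := by exact_mod_cast hν0.ne'
    have hq2 : μ * (1 - μ ^ 2) / (6 * (ν : ℂ) ^ 2) = cc μ / (((ν/2:ℝ)):ℂ)^2 := by
      rw [hxc]
      unfold cc
      field_simp
      ring
    beta_reduce
    rw [hmain, hq2]
    have hS := (S_props μ hx).2
    set S : ℂ := ∑' j : ℕ, LL μ (ν/2+(j:ℝ)) with hSdef
    have hccn : ‖cc μ / (((ν/2:ℝ)):ℂ)^2‖ = ‖cc μ‖/(ν/2)^2 := by
      rw [norm_div, norm_pow, Complex.norm_real, Real.norm_of_nonneg hx0.le]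
    have hx4 : (0:ℝ) < (ν/2)^2 := by positivity
    have hx44 : (0:ℝ) < (ν/2)^4 := by positivity
    have hfrac : 16*KK μ/(ν/2)^4 ≤ 16*KK μ/(ν/2)^2 := by
      apply div_le_div_of_nonneg_left (by linarith) hx4
      have h1x : (1:ℝ) ≤ (ν/2)^2 := by nlinarith [hx2]
      calc (ν/2)^2 = (ν/2)^2 * 1 := by ring
        _ ≤ (ν/2)^2 * (ν/2)^2 := by nlinarith [mul_le_mul_of_nonneg_left h1x hx4.le]
        _ = (ν/2)^4 := by ring
    have hnormS : ‖S‖ ≤ M/(ν/2)^2 := by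
      have h6 := norm_add_le (S - cc μ / (((ν/2:ℝ)):ℂ)^2) (cc μ / (((ν/2:ℝ)):ℂ)^2)
      rw [sub_add_cancel] at h6
      calc ‖S‖ ≤ ‖S - cc μ / (((ν/2:ℝ)):ℂ)^2‖ + ‖cc μ / (((ν/2:ℝ)):ℂ)^2‖ := h6
        _ ≤ 16*KK μ/(ν/2)^4 + ‖cc μ‖/(ν/2)^2 := by
            rw [hccn]
            exact add_le_add_left hS _
        _ ≤ 16*KK μ/(ν/2)^2 + ‖cc μ‖/(ν/2)^2 := add_le_add_left hfrac _
        _ = M/(ν/2)^2 := by rw [hM]; ring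
    have hS1 : ‖S‖ ≤ 1 := by
      refine hnormS.trans ?_
      rw [div_le_one hx4]
      nlinarith
    have hexp2 : ‖Complex.exp S - 1 - S‖ ≤ ‖S‖^2 := by
      have h7 := Complex.norm_exp_sub_one_sub_id_le (x := S) hS1
      exact h7
    have hdecomp : Complex.exp S - 1 - cc μ / (((ν/2:ℝ)):ℂ)^2
        = (Complex.exp S - 1 - S) + (S - cc μ / (((ν/2:ℝ)):ℂ)^2) := by ring
    rw [hdecomp]
    calc ‖(Complex.exp S - 1 - S) + (S - cc μ / (((ν/2:ℝ)):ℂ)^2)‖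
        ≤ ‖Complex.exp S - 1 - S‖ + ‖S - cc μ / (((ν/2:ℝ)):ℂ)^2‖ := norm_add_le _ _
      _ ≤ ‖S‖^2 + 16*KK μ/(ν/2)^4 := add_le_add hexp2 hS
      _ ≤ (M/(ν/2)^2)^2 + 16*KK μ/(ν/2)^4 := by
          have := pow_le_pow_left₀ (norm_nonneg S) hnormS 2
          exact add_le_add_left this _
      _ = (M^2 + 16*KK μ)/(ν/2)^4 := by
          rw [div_pow, show ((ν/2)^2)^2 = (ν/2)^4 from by ring, ← add_div]
      _ ≤ (16*(M^2 + 16*KK μ) + 1) / ν ^ 4 := by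
          rw [show ((ν:ℝ)/2)^4 = ν^4/16 from by ring, div_div_eq_mul_div]
          apply (div_le_div_iff_of_pos_right (by positivity)).mpr
          nlinarith [sq_nonneg M]
  · -- the identity
    intro ν hν
    have hc : (((Real.sqrt 2 : ℝ) : ℂ) * ((ν ^ ((4 : ℝ) / 3) : ℝ) : ℂ)) ≠ 0 :=
      mul_ne_zero (Complex.ofReal_ne_zero.mpr (Real.sqrt_ne_zero'.mpr two_pos))
        (Complex.ofReal_ne_zero.mpr (Real.rpow_pos_of_pos hν _).ne')
    set G : ℂ := (2 : ℂ) ^ (μ - 1 / 2) * Complex.Gamma (μ / 2 + (ν : ℂ) / 2 + 1 / 2) /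
            (Complex.exp ((μ + 4 / 3) * (Real.log ν : ℂ)) *
              Complex.Gamma ((ν : ℂ) / 2 - μ / 2 + 1 / 2)) with hG
    set q : ℂ := μ * (1 - μ ^ 2) / (6 * (ν : ℂ) ^ 2) with hq
    set c : ℂ := (((Real.sqrt 2 : ℝ) : ℂ) * ((ν ^ ((4 : ℝ) / 3) : ℝ) : ℂ)) with hcd
    show G = 1/c * (1 + q + (c * G - 1 - q))
    have h1 : 1 + q + (c * G - 1 - q) = c * G := by ring
    rw [h1, one_div, inv_mul_cancel_left₀ hc]
end

section
/- Define, for z ∈ ℂ ∖ {−1, 1}, the sequence G_0^{−}(z) = 1/(z + 1) and G_{s+1}^{−}(z) = (z (G_s^{−})'(z) + z² (G_s^{−})''(z))/(1 − z²) for s = 0, 1, 2, …. Then each G_s^{−} is a rational function of z whose only poles are at z = −1; that is, for each s there exists a polynomial P_s such that G_s^{−}(z) = P_s(z)/(z + 1)^{3s+1} for all z ∈ ℂ ∖ {−1, 1}. In particular the apparent singularity of G_s^{−} at z = 1 is removable, and G_s^{−} extends to a function analytic on ℂ ∖ {−1}. -/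
/-- `G_0^-(z) = 1/(z+1)` and `G_{s+1}^-(z) = (z (G_s^-)'(z) + z² (G_s^-)''(z))/(1-z²)`. -/
noncomputable def Gminus : ℕ → ℂ → ℂ
  | 0 => fun z => 1 / (z + 1)
  | s + 1 => fun z => (z * deriv (Gminus s) z + z ^ 2 * deriv (deriv (Gminus s)) z) / (1 - z ^ 2)


namespace GminusAux
open Polynomial Finset


/-- forward difference -/
noncomputable def dl (p : Polynomial ℂ) : Polynomial ℂ := p.comp (X + C 1) - p

lemma dl_C (a : ℂ) : dl (C a) = 0 := by simp [dl]

lemma dl_add (p q : Polynomial ℂ) : dl (p + q) = dl p + dl q := by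
  simp [dl, add_comp]; ring

lemma dl_sub (p q : Polynomial ℂ) : dl (p - q) = dl p - dl q := by
  simp [dl, sub_comp]; ring

lemma dl_natDegree_lt (p : Polynomial ℂ) (h : p.natDegree ≠ 0) :
    (dl p).natDegree < p.natDegree := by
  have hd : (p.comp (X + C 1)).natDegree = p.natDegree := by
    rw [natDegree_comp, natDegree_X_add_C, mul_one]
  have hlc : (p.comp (X + C 1)).coeff p.natDegree = p.leadingCoeff := by
    have h1 : (X + C (1:ℂ)).natDegree ≠ 0 := by rw [natDegree_X_add_C]; omega
    have := leadingCoeff_comp (p := p) h1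
    rw [leadingCoeff, hd, leadingCoeff_X_add_C, one_pow, mul_one] at this
    exact this
  have hle : (dl p).natDegree ≤ p.natDegree - 1 := by
    apply natDegree_le_iff_coeff_eq_zero.mpr
    intro m hm
    rcases Nat.lt_or_ge p.natDegree m with hgt | hle'
    · have h1 : (p.comp (X + C 1)).coeff m = 0 :=
        coeff_eq_zero_of_natDegree_lt (by rw [hd]; exact hgt)
      have h2 : p.coeff m = 0 := coeff_eq_zero_of_natDegree_lt hgt
      rw [dl, coeff_sub, h1, h2, sub_zero]
    · have hme : m = p.natDegree := le_antisymm hle' (by omega)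
      subst hme
      rw [dl, coeff_sub, hlc, coeff_natDegree, sub_self]
  omega

lemma dl_iterate_zero (k : ℕ) : ∀ p : Polynomial ℂ, p.natDegree < k → dl^[k] p = 0 := by
  induction k with
  | zero => intro p hp; omega
  | succ k ih =>
    intro p hp
    rw [Function.iterate_succ_apply]
    rcases Nat.eq_zero_or_pos p.natDegree with h0 | h0
    · obtain ⟨a, rfl⟩ := natDegree_eq_zero.mp h0
      rw [dl_C]
      exact Function.iterate_fixed (by simp [dl]) k
    · exact ih _ (by have := dl_natDegree_lt p (by omega); omega)

lemma dl_iterate_add (k : ℕ) (p q : Polynomial ℂ) :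
    dl^[k] (p + q) = dl^[k] p + dl^[k] q := by
  induction k generalizing p q with
  | zero => simp
  | succ k ih => rw [Function.iterate_succ_apply, dl_add, ih,
      Function.iterate_succ_apply, Function.iterate_succ_apply]

lemma dl_iterate_sub (k : ℕ) (p q : Polynomial ℂ) :
    dl^[k] (p - q) = dl^[k] p - dl^[k] q := by
  induction k generalizing p q with
  | zero => simp
  | succ k ih => rw [Function.iterate_succ_apply, dl_sub, ih,
      Function.iterate_succ_apply, Function.iterate_succ_apply]

lemma dl_comp_shift (p : Polynomial ℂ) (a : ℂ) :
    dl (p.comp (X - C a)) = (dl p).comp (X - C a) := by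
  simp only [dl, sub_comp, comp_assoc]
  congr 2
  · congr 1
    simp [add_comp, sub_comp]; ring


lemma exists_antidiff_aux (n : ℕ) : ∀ p : Polynomial ℂ, p.natDegree ≤ n →
    ∃ q : Polynomial ℂ, q - q.comp (X - C 2) = p ∧ q.natDegree ≤ n + 1 := by
  induction n with
  | zero =>
    intro p hp
    obtain ⟨a, rfl⟩ := natDegree_eq_zero.mp (le_antisymm hp (Nat.zero_le _))
    refine ⟨C (a / 2) * X, ?_, ?_⟩
    · simp [mul_comp]; ring_nf
      rw [← C_mul]
      congr 1
      ring
    · exact (natDegree_C_mul_le _ _).trans (by simp)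
  | succ n ih =>
    intro p hp
    set c : ℂ := p.coeff (n + 1) / (2 * (n + 2)) with hc
    set q₁ : Polynomial ℂ := C c * X ^ (n + 2) with hq₁
    set d₁ : Polynomial ℂ := q₁ - q₁.comp (X - C 2) with hd₁
    have hd₁e : d₁ = C c * (X ^ (n+2) - (X + C (-2:ℂ)) ^ (n+2)) := by
      rw [hd₁, hq₁]; simp [mul_comp, sub_comp]; ring
    have hcoeffd : ∀ m, n + 1 < m → d₁.coeff m = 0 := by
      intro m hm
      rw [hd₁e, coeff_C_mul, coeff_sub, coeff_X_add_C_pow]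
      rcases Nat.lt_or_ge m (n + 2) with h' | h'
      · omega
      rcases Nat.eq_or_lt_of_le h' with h'' | h''
      · subst h''; simp
      · rw [coeff_X_pow, if_neg (by omega), Nat.choose_eq_zero_of_lt (by omega)]
        simp
    have hdeg : d₁.natDegree ≤ n + 1 := natDegree_le_iff_coeff_eq_zero.mpr hcoeffd
    have hdc : d₁.coeff (n + 1) = c * (2 * (n + 2)) := by
      rw [hd₁e, coeff_C_mul, coeff_sub, coeff_X_add_C_pow, coeff_X_pow,
        if_neg (by omega)]
      have : (n + 2) - (n + 1) = 1 := by omega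
      rw [this]
      have h2 : (n+2).choose (n+1) = n + 2 := by
        have := Nat.succ_sub_one (n+2)
        rw [Nat.choose_succ_self_right]
      rw [h2]
      push_cast
      ring
    -- p - d₁ has degree ≤ n
    have hp' : (p - d₁).natDegree ≤ n := by
      apply natDegree_le_iff_coeff_eq_zero.mpr
      intro m hm
      rcases Nat.lt_or_ge (n+1) m with h' | h'
      · rw [coeff_sub, hcoeffd m h', coeff_eq_zero_of_natDegree_lt (by omega), sub_zero]
      · have hme : m = n + 1 := by omega
        subst hme
        have hne : (2 * ((n:ℂ) + 2)) ≠ 0 := by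
          have h0 : ((n:ℂ) + 2) ≠ 0 := by
            have := Nat.cast_ne_zero (R := ℂ).mpr (by omega : n + 2 ≠ 0)
            push_cast at this
            exact this
          simp [h0]
        rw [coeff_sub, hdc, hc, div_mul_cancel₀ _ hne, sub_self]
    obtain ⟨q₂, hq₂, hq₂d⟩ := ih (p - d₁) hp'
    refine ⟨q₁ + q₂, ?_, ?_⟩
    · rw [add_comp]
      have : q₁ + q₂ - (q₁.comp (X - C 2) + q₂.comp (X - C 2))
          = (q₁ - q₁.comp (X - C 2)) + (q₂ - q₂.comp (X - C 2)) := by ring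
      rw [this, ← hd₁, hq₂]; ring
    · refine (natDegree_add_le _ _).trans (max_le ?_ (by omega))
      rw [hq₁]
      exact (natDegree_C_mul_le _ _).trans (by simp)




lemma exists_antidiff (p : Polynomial ℂ) :
    ∃ q : Polynomial ℂ, q - q.comp (X - C 2) = p ∧ q.eval (-2) = 0 ∧
      q.natDegree ≤ p.natDegree + 1 := by
  obtain ⟨q, hq, hqd⟩ := exists_antidiff_aux p.natDegree p le_rfl
  refine ⟨q - C (q.eval (-2)), ?_, by simp, ?_⟩
  · rw [sub_comp, C_comp]
    rw [← hq]; ring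
  · exact (natDegree_sub_le _ _).trans (by simp [hqd])

noncomputable def qpol : ℕ → Polynomial ℂ
  | 0 => C 1
  | s + 1 => Classical.choose (exists_antidiff (X ^ 2 * qpol s))

lemma qpol_spec (s : ℕ) :
    qpol (s+1) - (qpol (s+1)).comp (X - C 2) = X ^ 2 * qpol s ∧
    (qpol (s+1)).eval (-2) = 0 ∧
    (qpol (s+1)).natDegree ≤ (X ^ 2 * qpol s).natDegree + 1 :=
  Classical.choose_spec (exists_antidiff (X ^ 2 * qpol s))

lemma qpol_deg (s : ℕ) : (qpol s).natDegree ≤ 3 * s := by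
  induction s with
  | zero => simp [qpol]
  | succ s ih =>
    have h := (qpol_spec s).2.2
    have h2 : (X ^ 2 * qpol s).natDegree ≤ 2 + 3 * s :=
      (natDegree_mul_le).trans (by simp [natDegree_X_pow]; omega)
    omega

/-- step-2 recursion at the level of values -/
lemma qpol_eval_rec (s : ℕ) (x : ℂ) :
    (qpol (s+1)).eval x - (qpol (s+1)).eval (x - 2) = x ^ 2 * (qpol s).eval x := by
  have h := congrArg (eval x) (qpol_spec s).1
  simpa [eval_comp] using h

lemma qpol_eval_neg2 (s : ℕ) : (qpol (s+1)).eval (-2) = 0 := (qpol_spec s).2.1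

lemma qpol_eval_zero (s : ℕ) : (qpol (s+1)).eval 0 = 0 := by
  have := qpol_eval_rec s 0
  simpa [qpol_eval_neg2 s] using this

lemma const_of_forall_shift (p : Polynomial ℂ)
    (h : ∀ x : ℂ, p.eval x = p.eval (x - 2)) : p = C (p.eval 0) := by
  have hall : ∀ k : ℕ, p.eval (-(2 * (k:ℂ))) = p.eval 0 := by
    intro k
    induction k with
    | zero => simp
    | succ k ih =>
      have h2 := h (-(2 * (k:ℂ)))
      rw [← ih, h2]
      congr 1
      push_cast
      ring
  have hr : (p - C (p.eval 0)) = 0 := by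
    apply Polynomial.eq_zero_of_infinite_isRoot
    apply Set.infinite_of_injective_forall_mem
      (f := fun k : ℕ => (-(2 * (k:ℂ))))
    · intro a b hab
      simp only [neg_inj, mul_right_inj' (two_ne_zero' ℂ)] at hab
      exact_mod_cast hab
    · intro k
      simp only [Set.mem_setOf_eq, IsRoot.def, eval_sub, eval_C, hall k, sub_self]
  exact sub_eq_zero.mp hr

noncomputable def inv (s : ℕ) : Polynomial ℂ :=
  ∑ i ∈ range (s+1), qpol i * (qpol (s-i)).comp (C (-2) - X)

lemma inv_eval (s : ℕ) (x : ℂ) :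
    (inv s).eval x = ∑ i ∈ range (s+1), (qpol i).eval x * (qpol (s-i)).eval (-2 - x) := by
  simp [inv, eval_finset_sum, eval_comp]

lemma qpol_zero : qpol 0 = C 1 := rfl

lemma inv_zero : inv 0 = C 1 := by
  simp [inv, qpol_zero]



lemma inv_and_neg1 : ∀ s : ℕ, inv s = C (if s = 0 then 1 else 0) ∧
    (s ≠ 0 → (qpol s).eval (-1) = 0) := by
  intro s
  induction s using Nat.strong_induction_on with
  | _ s ih =>
  match s with
  | 0 => exact ⟨by simpa using inv_zero, fun h => absurd rfl h⟩
  | Nat.succ t =>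
    have hconstt : ∀ y : ℂ, (inv t).eval y = (inv t).eval (y - 2) := by
      intro y
      rw [(ih t (by omega)).1]
      split <;> simp
    have hshift : ∀ x : ℂ, (inv (t+1)).eval x = (inv (t+1)).eval (x-2) := by
      intro x
      rw [← sub_eq_zero, inv_eval, inv_eval, ← Finset.sum_sub_distrib]
      have hterm : ∀ i ∈ range (t+2),
          (qpol i).eval x * (qpol (t+1-i)).eval (-2-x)
            - (qpol i).eval (x-2) * (qpol (t+1-i)).eval (-2-(x-2))
          = ((qpol i).eval x - (qpol i).eval (x-2)) * (qpol (t+1-i)).eval (-2-x)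
            + (qpol i).eval (x-2) * ((qpol (t+1-i)).eval (-2-x) - (qpol (t+1-i)).eval (-x)) := by
        intro i _
        have h2 : (-2 - (x-2)) = -x := by ring
        rw [h2]; ring
      rw [Finset.sum_congr rfl hterm, Finset.sum_add_distrib]
      have hA : ∑ i ∈ range (t+2),
          ((qpol i).eval x - (qpol i).eval (x-2)) * (qpol (t+1-i)).eval (-2-x)
          = x^2 * (inv t).eval x := by
        rw [Finset.sum_range_succ', inv_eval, Finset.mul_sum]
        have h0 : ((qpol 0).eval x - (qpol 0).eval (x-2)) * (qpol (t+1-0)).eval (-2-x) = 0 := by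
          simp [qpol_zero]
        rw [h0, add_zero]
        apply Finset.sum_congr rfl
        intro i hi
        have hsub : t + 1 - (i+1) = t - i := by omega
        rw [hsub, qpol_eval_rec i x]
        ring
      have hB : ∑ i ∈ range (t+2),
          (qpol i).eval (x-2) * ((qpol (t+1-i)).eval (-2-x) - (qpol (t+1-i)).eval (-x))
          = -(x^2 * (inv t).eval (x-2)) := by
        rw [Finset.sum_range_succ]
        have hlast : (qpol (t+1)).eval (x-2) * ((qpol (t+1-(t+1))).eval (-2-x)
            - (qpol (t+1-(t+1))).eval (-x)) = 0 := by
          simp [qpol_zero]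
        rw [hlast, add_zero, inv_eval, Finset.mul_sum, ← Finset.sum_neg_distrib]
        apply Finset.sum_congr rfl
        intro i hi
        have hile : i < t + 1 := Finset.mem_range.mp hi
        have hsub : t + 1 - i = (t - i) + 1 := by omega
        have e1 : (-2 - x : ℂ) = -x - 2 := by ring
        have e2 : (-2 - (x - 2) : ℂ) = -x := by ring
        rw [hsub, e1, e2]
        have hr := qpol_eval_rec (t - i) (-x)
        linear_combination (-(Polynomial.eval (x-2) (qpol i))) * hr
      rw [hA, hB, hconstt x]
      ring
    have hJ := const_of_forall_shift _ hshift
    have heval0 : (inv (t+1)).eval 0 = 0 := by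
      rw [inv_eval]
      apply Finset.sum_eq_zero
      intro i hi
      by_cases hit : i = t + 1
      · subst hit
        rw [qpol_eval_zero t, zero_mul]
      · have hile : i < t + 2 := Finset.mem_range.mp hi
        have hsub : t + 1 - i = (t - i) + 1 := by omega
        have e : (-2 - (0:ℂ)) = -2 := by norm_num
        rw [hsub, e, qpol_eval_neg2 (t-i), mul_zero]
    have hJ0 : inv (t+1) = 0 := by rw [hJ, heval0, map_zero]
    have hm1 : (qpol (t+1)).eval (-1) = 0 := by
      have h0 : (inv (t+1)).eval (-1) = 0 := by rw [hJ0]; simp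
      rw [inv_eval] at h0
      have harg : (-2 - (-1:ℂ)) = -1 := by norm_num
      rw [harg] at h0
      rw [Finset.sum_range_succ, Finset.sum_range_succ'] at h0
      have hmid : ∑ i ∈ range t,
          (qpol (i+1)).eval (-1) * (qpol (t+1-(i+1))).eval (-1) = 0 := by
        apply Finset.sum_eq_zero
        intro i hi
        rw [(ih (i+1) (by have := Finset.mem_range.mp hi; omega)).2 (by omega), zero_mul]
      rw [hmid] at h0
      simp only [qpol_zero, eval_C, Nat.sub_self, Nat.sub_zero, one_mul, mul_one, zero_add] at h0
      exact add_self_eq_zero.mp h0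
    exact ⟨by rw [hJ0]; simp, fun _ => hm1⟩


lemma dl_def (p : Polynomial ℂ) : dl p = p.comp (X + C 1) - p := rfl

lemma qpol_zero' : qpol 0 = C 1 := rfl

lemma qpol_eval_neg1 (s : ℕ) (h : s ≠ 0) : (qpol s).eval (-1) = 0 := (inv_and_neg1 s).2 h


/-- the elementary rational functions with pole only at `-1` -/
noncomputable def phiF (k : ℕ) : ℂ → ℂ := fun z => ((-1)^k * z^k) / (z+1)^(k+1)

noncomputable def psiF (k : ℕ) : ℂ → ℂ := fun z => ((-1)^k * z^k) / (z+1)^k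

noncomputable def Ecoef (q : Polynomial ℂ) (k : ℕ) : ℂ := (dl^[k] q).eval 0

noncomputable def Phi (q : Polynomial ℂ) : ℂ → ℂ :=
  fun z => ∑ k ∈ range (q.natDegree + 1), Ecoef q k * phiF k z

lemma Ecoef_eq_zero (q : Polynomial ℂ) (k : ℕ) (h : q.natDegree < k) : Ecoef q k = 0 := by
  rw [Ecoef, dl_iterate_zero k q h, eval_zero]

lemma PhiD (q : Polynomial ℂ) (D : ℕ) (hD : q.natDegree ≤ D) (z : ℂ) :
    Phi q z = ∑ k ∈ range (D + 1), Ecoef q k * phiF k z := by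
  rw [Phi]
  apply Finset.sum_subset (Finset.range_subset_range.mpr (by omega))
  intro k hk hnk
  rw [Ecoef_eq_zero q k (by simp only [Finset.mem_range] at hnk; omega), zero_mul]

lemma Ecoef_sub (p r : Polynomial ℂ) (k : ℕ) : Ecoef (p - r) k = Ecoef p k - Ecoef r k := by
  rw [Ecoef, Ecoef, Ecoef, dl_iterate_sub, eval_sub]

lemma Phi_sub (p r : Polynomial ℂ) (z : ℂ) : Phi (p - r) z = Phi p z - Phi r z := by
  set D := max (max p.natDegree r.natDegree) ((p - r).natDegree) with hD
  rw [PhiD p D (by omega), PhiD r D (by omega), PhiD (p - r) D (by omega),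
    ← Finset.sum_sub_distrib]
  apply Finset.sum_congr rfl
  intro k _
  rw [Ecoef_sub]
  ring

lemma ne_neg_one_iff (z : ℂ) (hz : z ≠ -1) : z + 1 ≠ 0 := by
  intro h0
  exact hz (eq_neg_of_add_eq_zero_left h0)

lemma phiF_hasDerivAt (k : ℕ) (z : ℂ) (hz : z + 1 ≠ 0) :
    HasDerivAt (phiF k)
      (((-1)^k * (k * z^(k-1)) * (z+1)^(k+1) - (-1)^k * z^k * ((k+1) * (z+1)^k)) /
        ((z+1)^(k+1))^2) z := by
  have h1 : HasDerivAt (fun z : ℂ => (-1:ℂ)^k * z^k) ((-1)^k * (k * z^(k-1))) z :=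
    (hasDerivAt_pow k z).const_mul _
  have h2 : HasDerivAt (fun z : ℂ => (z+1)^(k+1)) ((k+1) * (z+1)^k) z := by
    have := ((hasDerivAt_id z).add_const (1:ℂ)).fun_pow (k+1)
    simpa using this
  exact h1.div h2 (pow_ne_zero _ hz)

lemma phiF_differentiableAt (k : ℕ) (z : ℂ) (hz : z + 1 ≠ 0) :
    DifferentiableAt ℂ (phiF k) z := (phiF_hasDerivAt k z hz).differentiableAt

lemma cast_pow_aux (k : ℕ) (z : ℂ) : (k:ℂ) * z^(k-1) * z = k * z^k := by
  cases k with
  | zero => simp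
  | succ k => push_cast [pow_succ]; ring

lemma zmul_deriv_phiF (k : ℕ) (z : ℂ) (hz : z + 1 ≠ 0) :
    z * deriv (phiF k) z = k * phiF k z + ((k:ℂ)+1) * phiF (k+1) z := by
  rw [(phiF_hasDerivAt k z hz).deriv]
  cases k with
  | zero =>
    simp only [phiF, pow_zero, Nat.cast_zero, Nat.zero_sub, zero_mul, mul_zero, one_mul,
      Nat.cast_one, zero_add, mul_one, pow_one]
    field_simp
    ring
  | succ j =>
    simp only [phiF, Nat.add_sub_cancel]
    push_cast
    field_simp
    ring

lemma dl_X_mul (p : Polynomial ℂ) : dl (X * p) = X * dl p + p.comp (X + C 1) := by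
  simp only [dl_def, mul_comp, X_comp]
  ring_nf
  rw [C_1]
  ring

lemma dl_C_mul (c : ℂ) (p : Polynomial ℂ) : dl (C c * p) = C c * dl p := by
  simp only [dl_def, mul_comp, C_comp]
  ring

lemma dl_comp_shift_add (p : Polynomial ℂ) :
    dl (p.comp (X + C 1)) = (dl p).comp (X + C 1) := by
  simp only [dl_def, sub_comp, comp_assoc]

lemma dl_iter_X_mul (q : Polynomial ℂ) (k : ℕ) :
    dl^[k+1] (X * q) = X * dl^[k+1] q + C ((k:ℂ)+1) * (dl^[k] q).comp (X + C 1) := by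
  induction k with
  | zero =>
    simp only [Nat.cast_zero, zero_add, C_1, one_mul, Function.iterate_one,
      Function.iterate_zero, id_eq]
    exact dl_X_mul q
  | succ k ih =>
    have h1 : dl^[k+1+1] (X * q) = dl (dl^[k+1] (X * q)) :=
      Function.iterate_succ_apply' dl (k+1) (X * q)
    rw [h1, ih, dl_add, dl_X_mul, dl_C_mul, dl_comp_shift_add]
    have h2 : dl (dl^[k+1] q) = dl^[k+1+1] q := (Function.iterate_succ_apply' dl (k+1) q).symm
    have h3 : dl (dl^[k] q) = dl^[k+1] q := (Function.iterate_succ_apply' dl k q).symm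
    rw [h2, h3]
    have hC : C ((k:ℂ)+1+1) = C ((k:ℂ)+1) + C 1 := by rw [← C_add]
    push_cast
    rw [hC, C_1]
    ring

lemma eval_one_dl (q : Polynomial ℂ) (k : ℕ) :
    (dl^[k] q).eval 1 = Ecoef q k + Ecoef q (k+1) := by
  have h : dl^[k+1] q = (dl^[k] q).comp (X + C 1) - dl^[k] q := by
    rw [Function.iterate_succ_apply' dl k q, dl_def]
  have := congrArg (eval 0) h
  simp only [eval_sub, eval_comp, eval_add, eval_X, eval_C, zero_add] at this
  rw [Ecoef, Ecoef]
  linear_combination -this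

lemma Ecoef_X_mul_zero (q : Polynomial ℂ) : Ecoef (X * q) 0 = 0 := by
  simp [Ecoef]

lemma Ecoef_X_mul_succ (q : Polynomial ℂ) (k : ℕ) :
    Ecoef (X * q) (k+1) = ((k:ℂ)+1) * (Ecoef q k + Ecoef q (k+1)) := by
  rw [Ecoef, dl_iter_X_mul, eval_add, eval_mul, eval_mul, eval_X, zero_mul, eval_C,
    eval_comp]
  simp only [eval_add, eval_X, eval_C, zero_add, zero_mul]
  rw [eval_one_dl]

/-- θ(Phi q) = Phi (X q) away from -1 -/
lemma theta_Phi (q : Polynomial ℂ) (z : ℂ) (hz : z + 1 ≠ 0) :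
    z * deriv (Phi q) z = Phi (X * q) z := by
  set D := q.natDegree with hD
  have hPhieq : Phi q = fun w => ∑ k ∈ range (D+1), Ecoef q k * phiF k w := rfl
  have hderiv : deriv (Phi q) z = ∑ k ∈ range (D+1), Ecoef q k * deriv (phiF k) z := by
    rw [hPhieq]
    rw [deriv_fun_sum (fun k _ => ((phiF_differentiableAt k z hz).const_mul _))]
    apply Finset.sum_congr rfl
    intro k _
    exact deriv_const_mul _ (phiF_differentiableAt k z hz)
  have hXq : (X * q).natDegree ≤ D + 1 :=
    natDegree_mul_le.trans (by simp [natDegree_X]; omega)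
  have hR : Phi (X * q) z = ∑ k ∈ range (D+1), Ecoef (X * q) (k+1) * phiF (k+1) z := by
    rw [PhiD (X * q) (D+1) hXq z, Finset.sum_range_succ', Ecoef_X_mul_zero, zero_mul, add_zero]
  rw [hderiv, hR, Finset.mul_sum]
  have hterm : ∀ k ∈ range (D+1), z * (Ecoef q k * deriv (phiF k) z)
      = Ecoef q k * ((k:ℂ) * phiF k z) + Ecoef q k * (((k:ℂ)+1) * phiF (k+1) z) := by
    intro k _
    have h := zmul_deriv_phiF k z hz
    calc z * (Ecoef q k * deriv (phiF k) z)
        = Ecoef q k * (z * deriv (phiF k) z) := by ring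
      _ = _ := by rw [h]; ring
  rw [Finset.sum_congr rfl hterm, Finset.sum_add_distrib]
  have hterm2 : ∀ k ∈ range (D+1), Ecoef (X * q) (k+1) * phiF (k+1) z
      = ((k:ℂ)+1) * Ecoef q (k+1) * phiF (k+1) z
        + Ecoef q k * (((k:ℂ)+1) * phiF (k+1) z) := by
    intro k _
    rw [Ecoef_X_mul_succ]
    ring
  rw [Finset.sum_congr rfl hterm2, Finset.sum_add_distrib]
  congr 1
  rw [Finset.sum_range_succ']
  have h00 : Ecoef q 0 * (((0:ℕ):ℂ) * phiF 0 z) = 0 := by simp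
  rw [h00, add_zero, eq_comm, Finset.sum_range_succ,
    Ecoef_eq_zero q (D+1) (by omega), mul_zero, zero_mul, add_zero]
  apply Finset.sum_congr rfl
  intro k _
  push_cast
  ring


lemma dl_iter_comp_shift (p : Polynomial ℂ) (a : ℂ) (k : ℕ) :
    dl^[k] (p.comp (X - C a)) = (dl^[k] p).comp (X - C a) := by
  induction k with
  | zero => simp
  | succ k ih => rw [Function.iterate_succ_apply' , ih, dl_comp_shift,
      Function.iterate_succ_apply']

lemma Ecoef_comp_shift (q : Polynomial ℂ) (a : ℂ) (k : ℕ) :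
    Ecoef (q.comp (X - C a)) k = (dl^[k] q).eval (-a) := by
  rw [Ecoef, dl_iter_comp_shift, eval_comp]
  simp

lemma psiF_zero (z : ℂ) : psiF 0 z = 1 := by simp [psiF]

lemma phiF_eq_psi (k : ℕ) (z : ℂ) (hz : z + 1 ≠ 0) :
    phiF k z = psiF k z + psiF (k+1) z := by
  rw [phiF, psiF, psiF]
  field_simp
  ring

lemma zmul_phiF (k : ℕ) (z : ℂ) (hz : z + 1 ≠ 0) :
    z * phiF k z = -psiF (k+1) z := by
  rw [phiF, psiF]
  field_simp
  ring

lemma natDegree_comp_shift (q : Polynomial ℂ) (a : ℂ) :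
    (q.comp (X - C a)).natDegree = q.natDegree := by
  rw [natDegree_comp]
  simp

/-- the shift identity: z·Φ(q)(z) = -Φ(q(·-1))(z) + q(-1) -/
lemma zmul_Phi (q : Polynomial ℂ) (z : ℂ) (hz : z + 1 ≠ 0) :
    z * Phi q z = -(Phi (q.comp (X - C 1)) z) + q.eval (-1) := by
  set D := q.natDegree with hD
  set a : ℕ → ℂ := fun k => (dl^[k] q).eval (-1) with ha
  have haE : ∀ k, Ecoef q k = a k + a (k+1) := by
    intro k
    have h : dl^[k+1] q = (dl^[k] q).comp (X + C 1) - dl^[k] q :=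
      by rw [Function.iterate_succ_apply' dl k q, dl_def]
    have h2 := congrArg (eval (-1)) h
    simp only [eval_sub, eval_comp, eval_add, eval_X, eval_C, neg_add_cancel] at h2
    rw [ha, Ecoef]
    simp only
    linear_combination -h2
  have haD : a (D+1) = 0 := by
    rw [ha]
    simp only
    rw [dl_iterate_zero (D+1) q (by omega)]
    exact eval_zero
  have hL : z * Phi q z = ∑ k ∈ range (D+1), (a k + a (k+1)) * -psiF (k+1) z := by
    rw [Phi, Finset.mul_sum]
    apply Finset.sum_congr rfl
    intro k _
    rw [← haE]
    calc z * (Ecoef q k * phiF k z) = Ecoef q k * (z * phiF k z) := by ring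
      _ = _ := by rw [zmul_phiF k z hz]
  have hRE : Phi (q.comp (X - C 1)) z = ∑ k ∈ range (D+1), a k * (psiF k z + psiF (k+1) z) := by
    rw [PhiD (q.comp (X - C 1)) D (by rw [natDegree_comp_shift]) z]
    apply Finset.sum_congr rfl
    intro k _
    rw [Ecoef_comp_shift, phiF_eq_psi k z hz]
  rw [hL, hRE]
  have hsplit : ∑ k ∈ range (D+1), a k * (psiF k z + psiF (k+1) z)
      = ∑ k ∈ range (D+1), a k * psiF k z + ∑ k ∈ range (D+1), a k * psiF (k+1) z := by
    rw [← Finset.sum_add_distrib]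
    apply Finset.sum_congr rfl
    intro k _
    ring
  have hfirst : ∑ k ∈ range (D+1), a k * psiF k z
      = a 0 + ∑ k ∈ range (D+1), a (k+1) * psiF (k+1) z := by
    rw [Finset.sum_range_succ', psiF_zero, mul_one, eq_comm, Finset.sum_range_succ, haD,
      zero_mul, add_zero]
    ring
  have ha0 : q.eval (-1) = a 0 := rfl
  have hLsplit : ∑ k ∈ range (D+1), (a k + a (k+1)) * -psiF (k+1) z
      = -(∑ k ∈ range (D+1), a k * psiF (k+1) z)
        + -(∑ k ∈ range (D+1), a (k+1) * psiF (k+1) z) := by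
    rw [← Finset.sum_neg_distrib, ← Finset.sum_neg_distrib, ← Finset.sum_add_distrib]
    apply Finset.sum_congr rfl
    intro k _
    ring
  rw [hLsplit, hsplit, hfirst, ha0]
  ring

lemma comp_shift_shift (q : Polynomial ℂ) :
    (q.comp (X - C 1)).comp (X - C 1) = q.comp (X - C 2) := by
  rw [comp_assoc]
  congr 1
  simp only [sub_comp, X_comp, C_comp]
  rw [show (2:ℂ) = 1 + 1 by norm_num, C_add]
  ring

lemma omz_Phi (q : Polynomial ℂ) (z : ℂ) (hz : z + 1 ≠ 0) :
    (1 - z^2) * Phi q z = Phi (q - q.comp (X - C 2)) z + q.eval (-2) - q.eval (-1) * z := by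
  have h1 := zmul_Phi q z hz
  have h2 := zmul_Phi (q.comp (X - C 1)) z hz
  rw [comp_shift_shift] at h2
  have he : (q.comp (X - C 1)).eval (-1) = q.eval (-2) := by
    rw [eval_comp]
    norm_num
  rw [he] at h2
  rw [Phi_sub]
  linear_combination (-z) * h1 + h2 + (1 - z^2 + z^2) * (0:ℂ)

lemma Phi_analyticOnNhd (q : Polynomial ℂ) :
    AnalyticOnNhd ℂ (Phi q) {z : ℂ | z ≠ -1} := by
  apply DifferentiableOn.analyticOnNhd _ isOpen_ne
  intro z hz
  apply DifferentiableAt.differentiableWithinAt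
  exact DifferentiableAt.fun_sum fun k _ =>
    (phiF_differentiableAt k z (ne_neg_one_iff z hz)).const_mul _

lemma Phi_deriv_differentiableAt (q : Polynomial ℂ) (z : ℂ) (hz : z ≠ -1) :
    DifferentiableAt ℂ (deriv (Phi q)) z :=
  (((Phi_analyticOnNhd q).deriv) z hz).differentiableAt


lemma main_eq : ∀ s : ℕ, ∀ z : ℂ, z ≠ -1 → z ≠ 1 → Gminus s z = Phi (qpol s) z := by
  intro s
  induction s with
  | zero =>
    intro z hz1 hz2
    have h : Phi (C (1:ℂ)) z = phiF 0 z := by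
      have : Phi (C (1:ℂ)) = fun w => ∑ k ∈ range ((C (1:ℂ)).natDegree + 1),
          Ecoef (C 1) k * phiF k w := rfl
      rw [this]
      simp [natDegree_C, Ecoef]
    rw [qpol_zero', h]
    simp [Gminus, phiF]
  | succ s ih =>
    intro z hz1 hz2
    have hzo : z + 1 ≠ 0 := ne_neg_one_iff z hz1
    have hopen : IsOpen {w : ℂ | w ≠ -1 ∧ w ≠ 1} := by
      have he : {w : ℂ | w ≠ -1 ∧ w ≠ 1} = {w : ℂ | w ≠ -1} ∩ {w : ℂ | w ≠ 1} := rfl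
      rw [he]
      exact isOpen_ne.inter isOpen_ne
    have hd1 : ∀ w : ℂ, w ≠ -1 → w ≠ 1 → deriv (Gminus s) w = deriv (Phi (qpol s)) w := by
      intro w hw1 hw2
      apply Filter.EventuallyEq.deriv_eq
      apply Filter.eventuallyEq_of_mem (hopen.mem_nhds ⟨hw1, hw2⟩)
      intro u hu
      exact ih u hu.1 hu.2
    have hd2 : deriv (deriv (Gminus s)) z = deriv (deriv (Phi (qpol s))) z := by
      apply Filter.EventuallyEq.deriv_eq
      apply Filter.eventuallyEq_of_mem (hopen.mem_nhds ⟨hz1, hz2⟩)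
      intro u hu
      exact hd1 u hu.1 hu.2
    set q := qpol s with hqdef
    have hXq : ∀ w : ℂ, w ≠ -1 → w * deriv (Phi q) w = Phi (X * q) w :=
      fun w hw => theta_Phi q w (ne_neg_one_iff w hw)
    have hder2 : deriv (Phi (X * q)) z = deriv (fun w => w * deriv (Phi q) w) z := by
      apply Filter.EventuallyEq.deriv_eq
      apply Filter.eventuallyEq_of_mem (isOpen_ne.mem_nhds hz1)
      intro u hu
      exact (hXq u hu).symm
    have hprod : deriv (fun w => w * deriv (Phi q) w) z
        = deriv (Phi q) z + z * deriv (deriv (Phi q)) z := by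
      rw [deriv_fun_mul differentiableAt_fun_id (Phi_deriv_differentiableAt q z hz1)]
      simp
    have hth2 : z * deriv (Phi q) z + z^2 * deriv (deriv (Phi q)) z = Phi (X * (X * q)) z := by
      have h := theta_Phi (X * q) z hzo
      rw [hder2, hprod] at h
      linear_combination h
    have hnum : z * deriv (Gminus s) z + z^2 * deriv (deriv (Gminus s)) z
        = Phi (X^2 * q) z := by
      rw [hd1 z hz1 hz2, hd2, hqdef]
      rw [show X^2 * qpol s = X * (X * qpol s) by ring]
      exact hth2
    have hq1 : qpol (s+1) - (qpol (s+1)).comp (X - C 2) = X^2 * q := (qpol_spec s).1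
    have homz := omz_Phi (qpol (s+1)) z hzo
    rw [hq1, qpol_eval_neg2 s, qpol_eval_neg1 (s+1) (by omega)] at homz
    have h1z : (1 : ℂ) - z^2 ≠ 0 := by
      intro h
      have h2 : (1 - z) * (1 + z) = 0 := by linear_combination h
      rcases mul_eq_zero.mp h2 with h3 | h3
      · exact hz2 (by linear_combination -h3)
      · exact hz1 (by linear_combination h3)
    show (z * deriv (Gminus s) z + z ^ 2 * deriv (deriv (Gminus s)) z) / (1 - z ^ 2)
        = Phi (qpol (s+1)) z
    rw [hnum, div_eq_iff h1z]
    linear_combination -homz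

end GminusAux

open GminusAux Polynomial Finset in
/-- Each `G_s^-` is a rational function whose only poles are at `z = -1`: there is a
polynomial `P_s` with `G_s^-(z) = P_s(z)/(z+1)^(3s+1)` on `ℂ \ {-1, 1}`; in particular the
apparent singularity at `z = 1` is removable and `G_s^-` extends analytically to `ℂ \ {-1}`. -/
theorem Gminus_poles_only_at_neg_one (s : ℕ) :
    (∃ P : Polynomial ℂ, ∀ z : ℂ, z ≠ -1 → z ≠ 1 →
        Gminus s z = P.eval z / (z + 1) ^ (3 * s + 1)) ∧
    (∃ g : ℂ → ℂ, AnalyticOnNhd ℂ g {z : ℂ | z ≠ -1} ∧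
        ∀ z : ℂ, z ≠ -1 → z ≠ 1 → g z = Gminus s z) := by
  set q := qpol s with hq
  set P : Polynomial ℂ :=
    ∑ k ∈ range (3*s+1), Polynomial.C (Ecoef q k) * (-X)^k * (X+1)^(3*s - k) with hP
  have hPz : ∀ z : ℂ, z ≠ -1 → P.eval z / (z+1)^(3*s+1) = Phi q z := by
    intro z hz
    have hzo := ne_neg_one_iff z hz
    rw [PhiD q (3*s) (qpol_deg s) z, hP, eval_finset_sum, Finset.sum_div]
    apply Finset.sum_congr rfl
    intro k hk
    have hkle : k ≤ 3*s := by
      have := Finset.mem_range.mp hk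
      omega
    simp only [eval_mul, eval_pow, eval_neg, eval_X, eval_add, eval_one, eval_C]
    rw [phiF]
    have hsplit : (z+1)^(3*s+1) = (z+1)^(3*s-k) * (z+1)^(k+1) := by
      rw [← pow_add]
      congr 1
      omega
    rw [hsplit, neg_pow]
    field_simp
  constructor
  · exact ⟨P, fun z hz1 hz2 => by rw [main_eq s z hz1 hz2, ← hPz z hz1]⟩
  · refine ⟨fun z => P.eval z / (z+1)^(3*s+1), ?_, ?_⟩
    · apply DifferentiableOn.analyticOnNhd _ isOpen_ne
      intro z hz
      apply DifferentiableAt.differentiableWithinAt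
      apply DifferentiableAt.div
      · exact (Polynomial.differentiable P).differentiableAt
      · exact (((differentiable_id.add_const 1).pow _)).differentiableAt
      · exact pow_ne_zero _ (ne_neg_one_iff z hz)
    · intro z hz1 hz2
      show P.eval z / (z + 1) ^ (3 * s + 1) = Gminus s z
      rw [hPz z hz1, main_eq s z hz1 hz2]
end
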